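/- arXiv:1905.11434 — 11 statements merged into one kernel-verified Lean document; each statement's English description precedes it below -/
import Mathlib

section
/- For every y ∈ {0,1} and m ∈ {0,1}: if P(Y=y, M=m | X=1) + P(Y=1−y, M=m | X=0) > 1, then the event {ω ∈ Ω : Y1(ω)=y, Y0(ω)=1−y, M1(ω)=m, M0(ω)=m} has positive μ-measure (in particular it is nonempty). -/
/-!
By randomization, conditioning on `X = x` does not change the law of the potential variables, and
by consistency `(Y, M) = (Yₓ, Mₓ)` on `{X = x}`. Hence the two observed conditional probabilities
are at most `P(Y₁ = y, M₁ = m)` and `P(Y₀ = 1 - y, M₀ = m)`, and two events whose probabilities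
sum to more than one overlap in an event of positive probability.
-/

open MeasureTheory ProbabilityTheory
open scoped ENNReal

/-- Conditional probability `P(A | B) = mu(A ∩ B) / mu(B)` as a real number. -/
noncomputable def condP {Ω : Type*} [MeasurableSpace Ω] (μ : Measure Ω)
    (A B : Set Ω) : ℝ :=
  (μ (A ∩ B)).toReal / (μ B).toReal

section

variable {Ω : Type*} [MeasurableSpace Ω] {μ : Measure Ω}

/-- When `μ B = 0` the left-hand side is the junk value `0`, so only an inequality holds in
general. -/
theorem condP_le_of_measure_inter_eq_mul {A B S : Set Ω} (h : μ (S ∩ B) = μ B * μ A) :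
    condP μ S B ≤ (μ A).toReal := by
  rw [condP, h, ENNReal.toReal_mul]
  exact div_le_of_le_mul₀ ENNReal.toReal_nonneg ENNReal.toReal_nonneg (mul_comm _ _).le

theorem condP_preimage_le_of_indepFun {β γ : Type*} [MeasurableSpace β] [MeasurableSpace γ]
    {X : Ω → β} {V : Ω → γ} (hXV : IndepFun X V μ) {t : Set β} {s : Set γ}
    (ht : MeasurableSet t) (hs : MeasurableSet s) :
    condP μ (V ⁻¹' s) (X ⁻¹' t) ≤ (μ (V ⁻¹' s)).toReal :=
  condP_le_of_measure_inter_eq_mul <| by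
    rw [Set.inter_comm]
    exact hXV.measure_inter_preimage_eq_mul t s ht hs

theorem condP_congr_of_forall_eq {α β γ : Type*} {X : Ω → α} {x : α} {Y Y' : Ω → β}
    {M M' : Ω → γ} (hY : ∀ ω, X ω = x → Y ω = Y' ω) (hM : ∀ ω, X ω = x → M ω = M' ω)
    (y : β) (m : γ) :
    condP μ {ω | Y ω = y ∧ M ω = m} {ω | X ω = x} =
      condP μ {ω | Y' ω = y ∧ M' ω = m} {ω | X ω = x} := by
  have hinter : {ω | Y ω = y ∧ M ω = m} ∩ {ω | X ω = x} =
      {ω | Y' ω = y ∧ M' ω = m} ∩ {ω | X ω = x} := by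
    ext ω
    simp only [Set.mem_inter_iff, Set.mem_ofPred_eq]
    constructor <;> rintro ⟨⟨rfl, rfl⟩, hx⟩ <;> simp [hY ω hx, hM ω hx, hx]
  rw [condP, condP, hinter]

theorem measure_inter_pos_of_one_lt_add [IsProbabilityMeasure μ] {A B : Set Ω}
    (hB : MeasurableSet B) (h : 1 < μ A + μ B) : 0 < μ (A ∩ B) := by
  refine pos_iff_ne_zero.mpr fun hAB => h.not_ge ?_
  calc μ A + μ B = μ (A ∪ B) + μ (A ∩ B) := (measure_union_add_inter A hB).symm
    _ ≤ 1 := by rw [hAB, add_zero]; exact prob_le_one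

end

theorem statement0_general
    {Ω : Type*} [MeasurableSpace Ω] (μ : Measure Ω) [IsProbabilityMeasure μ]
    (Y1 Y0 M1 M0 X Y M : Ω → ℕ)
    (hY0meas : Measurable Y0)
    (hM0meas : Measurable M0)
    (hindep : IndepFun X (fun ω => (Y1 ω, Y0 ω, M1 ω, M0 ω)) μ)
    (hYcons1 : ∀ ω, X ω = 1 → Y ω = Y1 ω)
    (hYcons0 : ∀ ω, X ω = 0 → Y ω = Y0 ω)
    (hMcons1 : ∀ ω, X ω = 1 → M ω = M1 ω)
    (hMcons0 : ∀ ω, X ω = 0 → M ω = M0 ω)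
    (y m : ℕ)
    (hemp : condP μ {ω | Y ω = y ∧ M ω = m} {ω | X ω = 1}
        + condP μ {ω | Y ω = 1 - y ∧ M ω = m} {ω | X ω = 0} > 1) :
    0 < μ {ω | Y1 ω = y ∧ Y0 ω = 1 - y ∧ M1 ω = m ∧ M0 ω = m} ∧
      {ω | Y1 ω = y ∧ Y0 ω = 1 - y ∧ M1 ω = m ∧ M0 ω = m}.Nonempty := by
  set A := {ω | Y1 ω = y ∧ M1 ω = m}
  set B := {ω | Y0 ω = 1 - y ∧ M0 ω = m}
  have hA : condP μ {ω | Y ω = y ∧ M ω = m} {ω | X ω = 1} ≤ (μ A).toReal :=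
    (condP_congr_of_forall_eq hYcons1 hMcons1 y m).trans_le <|
      condP_preimage_le_of_indepFun hindep (t := {1}) (s := {p | p.1 = y ∧ p.2.2.1 = m})
        .of_discrete .of_discrete
  have hB : condP μ {ω | Y ω = 1 - y ∧ M ω = m} {ω | X ω = 0} ≤ (μ B).toReal :=
    (condP_congr_of_forall_eq hYcons0 hMcons0 (1 - y) m).trans_le <|
      condP_preimage_le_of_indepFun hindep (t := {0}) (s := {p | p.2.1 = 1 - y ∧ p.2.2.2 = m})
        .of_discrete .of_discrete
  have hsum : 1 < μ A + μ B := by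
    have hreal : 1 < (μ A + μ B).toReal := by
      rw [ENNReal.toReal_add (measure_ne_top μ A) (measure_ne_top μ B)]
      linarith
    rwa [← ENNReal.toReal_one, ENNReal.toReal_lt_toReal ENNReal.one_ne_top (by finiteness)]
      at hreal
  have hpos : 0 < μ (A ∩ B) := measure_inter_pos_of_one_lt_add
    ((measurableSet_singleton _).preimage hY0meas |>.inter <|
      (measurableSet_singleton _).preimage hM0meas) hsum
  have hset : {ω | Y1 ω = y ∧ Y0 ω = 1 - y ∧ M1 ω = m ∧ M0 ω = m} = A ∩ B := by
    ext ω
    simp only [A, B, Set.mem_inter_iff, Set.mem_ofPred_eq]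
    tauto
  rw [hset]
  exact ⟨hpos, nonempty_of_measure_ne_zero hpos.ne'⟩

theorem statement0
    {Ω : Type*} [MeasurableSpace Ω] (μ : Measure Ω) [IsProbabilityMeasure μ]
    (Y1 Y0 M1 M0 X Y M : Ω → ℕ)
    (hY1meas : Measurable Y1) (hY0meas : Measurable Y0)
    (hM1meas : Measurable M1) (hM0meas : Measurable M0)
    (hXmeas : Measurable X)
    (hY1bin : ∀ ω, Y1 ω ≤ 1) (hY0bin : ∀ ω, Y0 ω ≤ 1)
    (hM1bin : ∀ ω, M1 ω ≤ 1) (hM0bin : ∀ ω, M0 ω ≤ 1)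
    (hXbin : ∀ ω, X ω ≤ 1)
    (hXpos : 0 < μ {ω | X ω = 1}) (hXlt : μ {ω | X ω = 1} < 1)
    (hindep : IndepFun X (fun ω => (Y1 ω, Y0 ω, M1 ω, M0 ω)) μ)
    (hYcons1 : ∀ ω, X ω = 1 → Y ω = Y1 ω)
    (hYcons0 : ∀ ω, X ω = 0 → Y ω = Y0 ω)
    (hMcons1 : ∀ ω, X ω = 1 → M ω = M1 ω)
    (hMcons0 : ∀ ω, X ω = 0 → M ω = M0 ω)
    (y m : ℕ) (hy : y ≤ 1) (hm : m ≤ 1)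
    (hemp : condP μ {ω | Y ω = y ∧ M ω = m} {ω | X ω = 1}
        + condP μ {ω | Y ω = 1 - y ∧ M ω = m} {ω | X ω = 0} > 1) :
    0 < μ {ω | Y1 ω = y ∧ Y0 ω = 1 - y ∧ M1 ω = m ∧ M0 ω = m} ∧
      {ω | Y1 ω = y ∧ Y0 ω = 1 - y ∧ M1 ω = m ∧ M0 ω = m}.Nonempty :=
  statement0_general μ Y1 Y0 M1 M0 X Y M hY0meas hM0meas hindep hYcons1 hYcons0 hMcons1 hMcons0 y m
    hemp
end

section
/- For every y ∈ {0,1} and m ∈ {0,1}: P(Y=y, M=m | X=1) + P(Y=1−y, M=m | X=0) − 1 ≤ P_c(y,1−y,m,m) − P_c(1−y,y,m,m). -/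
open MeasureTheory ProbabilityTheory

/-- Counterfactual probability `P_c(y1, y0, m1, m0)`. -/
noncomputable def Pc {Ω : Type*} [MeasurableSpace Ω] (μ : Measure Ω)
    (Y1 Y0 M1 M0 : Ω → ℕ) (y1 y0 m1 m0 : ℕ) : ℝ :=
  (μ {ω | Y1 ω = y1 ∧ Y0 ω = y0 ∧ M1 ω = m1 ∧ M0 ω = m0}).toReal

/-!
Let `A = {Y1 = y, M1 = m}` and `B = {Y0 = 1 - y, M0 = m}`. On `{X = x}` consistency turns the
observed events into `A` resp. `B`, and randomization makes them independent of `X`, so the two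
observed conditional probabilities are `μ A` and `μ B`. Now `P_c(y, 1 - y, m, m) = μ (A ∩ B)`,
while the event of `P_c(1 - y, y, m, m)` lies outside `A ∪ B` because `1 - y ≠ y`, and
`μ A + μ B - 1 = μ (A ∩ B) - μ (A ∪ B)ᶜ`.
-/

section

variable {Ω : Type*} [MeasurableSpace Ω] {μ : Measure Ω}

lemma measureReal_add_measureReal_sub_one_le [IsProbabilityMeasure μ] {A B C : Set Ω}
    (hA : MeasurableSet A) (hB : MeasurableSet B) (hC : Disjoint (A ∪ B) C) :
    μ.real A + μ.real B - 1 ≤ μ.real (A ∩ B) - μ.real C := by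
  have hunion := measureReal_union_add_inter (μ := μ) (s := A) hB
  have hcompl : μ.real C ≤ μ.real (A ∪ B)ᶜ := measureReal_mono hC.subset_compl_left
  rw [probReal_compl_eq_one_sub (hA.union hB)] at hcompl
  linarith

lemma measure_compl_ne_zero_of_lt_one [IsProbabilityMeasure μ] {s : Set Ω} (hs : μ s < 1) :
    μ sᶜ ≠ 0 := by
  intro h
  have := measure_univ_le_add_compl (μ := μ) s
  rw [measure_univ, h, add_zero] at this
  exact hs.not_ge this

lemma condP_preimage_eq_of_indepFun [IsFiniteMeasure μ] {β γ : Type*} [MeasurableSpace β]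
    [MeasurableSpace γ] {X : Ω → β} {g : Ω → γ} (h : IndepFun X g μ) {s : Set β} {t : Set γ}
    (hs : MeasurableSet s) (ht : MeasurableSet t) (hX : μ (X ⁻¹' s) ≠ 0) :
    condP μ (g ⁻¹' t) (X ⁻¹' s) = μ.real (g ⁻¹' t) := by
  have hX' : (μ (X ⁻¹' s)).toReal ≠ 0 := ENNReal.toReal_ne_zero.2 ⟨hX, measure_ne_top μ _⟩
  rw [condP, Set.inter_comm, h.measure_inter_preimage_eq_mul s t hs ht, ENNReal.toReal_mul,
    mul_div_cancel_left₀ _ hX', measureReal_def]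

lemma condP_eq_measureReal_of_indepFun_of_consistent [IsFiniteMeasure μ] {β γ : Type*}
    [MeasurableSpace β] [MeasurableSingletonClass β] [MeasurableSpace γ] {X : Ω → β}
    {g : Ω → γ} (h : IndepFun X g μ) {x : β} {A : Set Ω} {t : Set γ} (ht : MeasurableSet t)
    (hX : μ {ω | X ω = x} ≠ 0) (hcons : ∀ ω, X ω = x → (ω ∈ A ↔ g ω ∈ t)) :
    condP μ A {ω | X ω = x} = μ.real (g ⁻¹' t) := by
  have hA : A ∩ {ω | X ω = x} = g ⁻¹' t ∩ {ω | X ω = x} := by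
    ext ω
    simp only [Set.mem_inter_iff, Set.mem_preimage, Set.mem_ofPred_eq]
    exact ⟨fun ⟨hω, hx⟩ ↦ ⟨(hcons ω hx).1 hω, hx⟩, fun ⟨hω, hx⟩ ↦ ⟨(hcons ω hx).2 hω, hx⟩⟩
  rw [← condP_preimage_eq_of_indepFun h (measurableSet_singleton x) ht hX]
  simp only [condP, hA]
  rfl

end

theorem statement3_general
    {Ω : Type*} [MeasurableSpace Ω] (μ : Measure Ω) [IsProbabilityMeasure μ]
    (Y1 Y0 M1 M0 X Y M : Ω → ℕ)
    (hY1meas : Measurable Y1) (hY0meas : Measurable Y0)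
    (hM1meas : Measurable M1) (hM0meas : Measurable M0)
    (hXbin : ∀ ω, X ω ≤ 1)
    (hXpos : 0 < μ {ω | X ω = 1}) (hXlt : μ {ω | X ω = 1} < 1)
    (hindep : IndepFun X (fun ω => (Y1 ω, Y0 ω, M1 ω, M0 ω)) μ)
    (hYcons1 : ∀ ω, X ω = 1 → Y ω = Y1 ω)
    (hYcons0 : ∀ ω, X ω = 0 → Y ω = Y0 ω)
    (hMcons1 : ∀ ω, X ω = 1 → M ω = M1 ω)
    (hMcons0 : ∀ ω, X ω = 0 → M ω = M0 ω)
    (y m : ℕ)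
    :
    condP μ {ω | Y ω = y ∧ M ω = m} {ω | X ω = 1}
      + condP μ {ω | Y ω = 1 - y ∧ M ω = m} {ω | X ω = 0} - 1
    ≤ Pc μ Y1 Y0 M1 M0 y (1 - y) m m - Pc μ Y1 Y0 M1 M0 (1 - y) y m m := by
  set g : Ω → ℕ × ℕ × ℕ × ℕ := fun ω ↦ (Y1 ω, Y0 ω, M1 ω, M0 ω)
  have hg : Measurable g := hY1meas.prodMk (hY0meas.prodMk (hM1meas.prodMk hM0meas))
  set t1 : Set (ℕ × ℕ × ℕ × ℕ) := {p | p.1 = y ∧ p.2.2.1 = m}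
  set t0 : Set (ℕ × ℕ × ℕ × ℕ) := {p | p.2.1 = 1 - y ∧ p.2.2.2 = m}
  have hX0 : μ {ω | X ω = 0} ≠ 0 := by
    refine fun h ↦ measure_compl_ne_zero_of_lt_one hXlt (measure_mono_null (fun ω hω ↦ ?_) h)
    have := hXbin ω
    simp only [Set.mem_compl_iff, Set.mem_ofPred_eq] at hω ⊢
    omega
  have hcond1 : condP μ {ω | Y ω = y ∧ M ω = m} {ω | X ω = 1} = μ.real (g ⁻¹' t1) :=
    condP_eq_measureReal_of_indepFun_of_consistent hindep .of_discrete hXpos.ne'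
      fun ω hx ↦ by simp [g, t1, hYcons1 ω hx, hMcons1 ω hx]
  have hcond0 : condP μ {ω | Y ω = 1 - y ∧ M ω = m} {ω | X ω = 0} = μ.real (g ⁻¹' t0) :=
    condP_eq_measureReal_of_indepFun_of_consistent hindep .of_discrete hX0
      fun ω hx ↦ by simp [g, t0, hYcons0 ω hx, hMcons0 ω hx]
  have hdisj : Disjoint (g ⁻¹' t1 ∪ g ⁻¹' t0)
      {ω | Y1 ω = 1 - y ∧ Y0 ω = y ∧ M1 ω = m ∧ M0 ω = m} := by
    refine Set.disjoint_left.2 fun ω hω hC ↦ ?_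
    simp only [g, t1, t0, Set.mem_union, Set.mem_preimage, Set.mem_ofPred_eq] at hω hC
    omega
  have hgood :
      g ⁻¹' t1 ∩ g ⁻¹' t0 = {ω | Y1 ω = y ∧ Y0 ω = 1 - y ∧ M1 ω = m ∧ M0 ω = m} := by
    ext ω
    simp only [g, t1, t0, Set.mem_ofPred_eq, Set.mem_inter_iff, Set.mem_preimage]
    tauto
  have hbound :=
    measureReal_add_measureReal_sub_one_le (μ := μ) (hg .of_discrete) (hg .of_discrete) hdisj
  rw [hgood] at hbound
  rw [hcond1, hcond0]
  exact hbound

theorem statement3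
    {Ω : Type*} [MeasurableSpace Ω] (μ : Measure Ω) [IsProbabilityMeasure μ]
    (Y1 Y0 M1 M0 X Y M : Ω → ℕ)
    (hY1meas : Measurable Y1) (hY0meas : Measurable Y0)
    (hM1meas : Measurable M1) (hM0meas : Measurable M0)
    (hXmeas : Measurable X)
    (hY1bin : ∀ ω, Y1 ω ≤ 1) (hY0bin : ∀ ω, Y0 ω ≤ 1)
    (hM1bin : ∀ ω, M1 ω ≤ 1) (hM0bin : ∀ ω, M0 ω ≤ 1)
    (hXbin : ∀ ω, X ω ≤ 1)
    (hXpos : 0 < μ {ω | X ω = 1}) (hXlt : μ {ω | X ω = 1} < 1)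
    (hindep : IndepFun X (fun ω => (Y1 ω, Y0 ω, M1 ω, M0 ω)) μ)
    (hYcons1 : ∀ ω, X ω = 1 → Y ω = Y1 ω)
    (hYcons0 : ∀ ω, X ω = 0 → Y ω = Y0 ω)
    (hMcons1 : ∀ ω, X ω = 1 → M ω = M1 ω)
    (hMcons0 : ∀ ω, X ω = 0 → M ω = M0 ω)
    (y m : ℕ) (hy : y ≤ 1) (hm : m ≤ 1)
    :
    condP μ {ω | Y ω = y ∧ M ω = m} {ω | X ω = 1}
      + condP μ {ω | Y ω = 1 - y ∧ M ω = m} {ω | X ω = 0} - 1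
    ≤ Pc μ Y1 Y0 M1 M0 y (1 - y) m m - Pc μ Y1 Y0 M1 M0 (1 - y) y m m :=
  statement3_general μ Y1 Y0 M1 M0 X Y M hY1meas hY0meas hM1meas hM0meas hXbin hXpos hXlt hindep
    hYcons1 hYcons0 hMcons1 hMcons0 y m
end

section
/- For every y ∈ {0,1} and m ∈ {0,1}: if P(Y=y, M=m | X=1) + P(Y=1−y, M=m | X=0) > 1, then μ({M1=m} ∩ {M0=m}) > 0 and [P(Y=y, M=m | X=1) + P(Y=1−y, M=m | X=0) − 1] / [P(M=m | X=1) − P(M=1−m | X=0)] ≤ [P_c(y,1−y,m,m) − P_c(1−y,y,m,m)] / μ({M1=m} ∩ {M0=m}); moreover the right-hand side equals P(Y1=y, Y0=1−y | M1=m, M0=m) − P(Y1=1−y, Y0=y | M1=m, M0=m), where P(A | B) := μ(A ∩ B)/μ(B). -/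
open MeasureTheory ProbabilityTheory

lemma div_le_div_add_of_le {d s t D : ℝ} (hd : 0 < d) (hds : d ≤ s) (ht : 0 ≤ t)
    (hdD : d + t ≤ D) : d / D ≤ s / (s + t) :=
  calc d / D ≤ d / (d + t) := div_le_div_of_nonneg_left hd.le (by linarith) hdD
    _ ≤ s / (s + t) := by
      rw [div_le_div_iff₀ (by linarith) (by linarith)]
      nlinarith

section MeasureReal

variable {Ω : Type*} [MeasurableSpace Ω] {μ : Measure Ω} {A B C D : Set Ω}

lemma measureReal_add_add_le_of_subset [IsFiniteMeasure μ] (hB : MeasurableSet B)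
    (hC : MeasurableSet C) (hAB : Disjoint A B) (hABC : Disjoint (A ∪ B) C)
    (hD : A ∪ B ∪ C ⊆ D) : μ.real A + μ.real B + μ.real C ≤ μ.real D := by
  rw [← measureReal_union hAB hB, ← measureReal_union hABC hC]
  exact measureReal_mono hD

lemma measureReal_add_add_le_one_add_inter [IsProbabilityMeasure μ] (hB : MeasurableSet B)
    (hC : MeasurableSet C) (hAC : Disjoint A C) (hBC : Disjoint B C) :
    μ.real A + μ.real B + μ.real C ≤ 1 + μ.real (A ∩ B) := by
  rw [← measureReal_union_add_inter hB, add_right_comm,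
    ← measureReal_union (Set.disjoint_union_left.2 ⟨hAC, hBC⟩) hC]
  linarith [measureReal_le_one (μ := μ) (s := A ∪ B ∪ C)]

lemma measureReal_inter_eq_add_inter_eq_one_sub [IsFiniteMeasure μ] {Z : Ω → ℕ}
    (hZ : Measurable Z) (hZbin : ∀ ω, Z ω ≤ 1) {v : ℕ} (hv : v ≤ 1) (s : Set Ω) :
    μ.real (s ∩ {ω | Z ω = v}) + μ.real (s ∩ {ω | Z ω = 1 - v}) = μ.real s := by
  have hcompl : s ∩ {ω | Z ω = 1 - v} = s \ {ω | Z ω = v} := by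
    ext ω
    have := hZbin ω
    simp only [Set.mem_inter_iff, Set.mem_sdiff, Set.mem_ofPred_eq]
    exact and_congr_right fun _ => by omega
  rw [hcompl]
  exact measureReal_inter_add_sdiff (hZ (measurableSet_singleton v))

lemma measureReal_eq_add_measureReal_eq_one_sub [IsProbabilityMeasure μ] {Z : Ω → ℕ}
    (hZ : Measurable Z) (hZbin : ∀ ω, Z ω ≤ 1) {v : ℕ} (hv : v ≤ 1) :
    μ.real {ω | Z ω = v} + μ.real {ω | Z ω = 1 - v} = 1 := by
  simpa using measureReal_inter_eq_add_inter_eq_one_sub (μ := μ) hZ hZbin hv Set.univ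

lemma measure_eq_zero_ne_zero_of_measure_eq_one_lt_one [IsProbabilityMeasure μ] {X : Ω → ℕ}
    (hXbin : ∀ ω, X ω ≤ 1) (hX1 : μ {ω | X ω = 1} < 1) : μ {ω | X ω = 0} ≠ 0 := fun h0 ↦ by
  have hcover : μ Set.univ ≤ μ {ω | X ω = 0} + μ {ω | X ω = 1} := by
    refine (measure_mono fun ω _ ↦ ?_).trans (measure_union_le _ _)
    have := hXbin ω
    simp only [Set.mem_union, Set.mem_ofPred_eq]
    omega
  rw [measure_univ, h0, zero_add] at hcover
  exact hX1.not_ge hcover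

end MeasureReal

lemma condP_eq_measureReal_of_indepFun {Ω α β : Type*} [MeasurableSpace Ω] [MeasurableSpace α]
    [MeasurableSingletonClass α] [MeasurableSpace β] {μ : Measure Ω} [IsFiniteMeasure μ]
    {X : Ω → α} {V : Ω → β} (hXV : IndepFun X V μ) {x : α} (hx : μ {ω | X ω = x} ≠ 0)
    {S : Set β} (hS : MeasurableSet S) {E : Set Ω} (hE : ∀ ω, X ω = x → (ω ∈ E ↔ V ω ∈ S)) :
    condP μ E {ω | X ω = x} = μ.real (V ⁻¹' S) := by
  have hEX : E ∩ {ω | X ω = x} = X ⁻¹' {x} ∩ V ⁻¹' S := by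
    ext ω
    simp only [Set.mem_inter_iff, Set.mem_ofPred_eq, Set.mem_preimage, Set.mem_singleton_iff]
    exact ⟨fun ⟨hω, hωx⟩ => ⟨hωx, (hE ω hωx).1 hω⟩, fun ⟨hωx, hω⟩ => ⟨(hE ω hωx).2 hω, hωx⟩⟩
  have hx' : (μ (X ⁻¹' {x})).toReal ≠ 0 := ENNReal.toReal_ne_zero.2 ⟨hx, measure_ne_top μ _⟩
  rw [condP, hEX, hXV.measure_inter_preimage_eq_mul _ _ (measurableSet_singleton x) hS,
    ENNReal.toReal_mul]
  exact mul_div_cancel_left₀ _ hx'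

section CounterfactualBound

variable {Ω : Type*} [MeasurableSpace Ω] {μ : Measure Ω} {Y1 Y0 M1 M0 : Ω → ℕ}

lemma Pc_eq_measureReal_inter (y1 y0 m1 m0 : ℕ) :
    Pc μ Y1 Y0 M1 M0 y1 y0 m1 m0
      = μ.real ({ω | Y1 ω = y1 ∧ Y0 ω = y0} ∩ {ω | M1 ω = m1 ∧ M0 ω = m0}) := by
  simp only [Pc, Measure.real, Set.inter_ofPred_eq_sep, Set.sep_ofPred, and_assoc]

lemma Pc_div_eq_condP (y1 y0 m1 m0 : ℕ) :
    Pc μ Y1 Y0 M1 M0 y1 y0 m1 m0 / μ.real ({ω | M1 ω = m1} ∩ {ω | M0 ω = m0})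
      = condP μ {ω | Y1 ω = y1 ∧ Y0 ω = y0} {ω | M1 ω = m1 ∧ M0 ω = m0} := by
  rw [Pc_eq_measureReal_inter]
  rfl

variable [IsProbabilityMeasure μ] {y m : ℕ}

lemma treated_add_control_add_Pc_le (hY1 : Measurable Y1) (hY0 : Measurable Y0)
    (hM1 : Measurable M1) (hM0 : Measurable M0) (hy : y ≤ 1) :
    μ.real {ω | Y1 ω = y ∧ M1 ω = m} + μ.real {ω | Y0 ω = 1 - y ∧ M0 ω = m}
        + Pc μ Y1 Y0 M1 M0 (1 - y) y m m ≤ 1 + Pc μ Y1 Y0 M1 M0 y (1 - y) m m := by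
  have hinter : {ω | Y1 ω = y ∧ M1 ω = m} ∩ {ω | Y0 ω = 1 - y ∧ M0 ω = m}
      = {ω | Y1 ω = y ∧ Y0 ω = 1 - y ∧ M1 ω = m ∧ M0 ω = m} := by
    ext ω
    simp only [Set.mem_inter_iff, Set.mem_ofPred_eq]
    tauto
  rw [Pc, Pc, ← hinter]
  refine measureReal_add_add_le_one_add_inter (by measurability) (by measurability)
    (Set.disjoint_left.2 fun ω h1 h2 => ?_) (Set.disjoint_left.2 fun ω h1 h2 => ?_)
  all_goals simp only [Set.mem_ofPred_eq] at h1 h2; omega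

lemma Pc_add_Pc_add_treated_le (hY1 : Measurable Y1) (hY0 : Measurable Y0)
    (hM1 : Measurable M1) (hM0 : Measurable M0) (hy : y ≤ 1) :
    Pc μ Y1 Y0 M1 M0 (1 - y) y m m + Pc μ Y1 Y0 M1 M0 (1 - y) (1 - y) m m
      + μ.real {ω | Y1 ω = y ∧ M1 ω = m} ≤ μ.real {ω | M1 ω = m} := by
  refine measureReal_add_add_le_of_subset (by measurability) (by measurability)
    (Set.disjoint_left.2 fun ω h1 h2 => ?_) (Set.disjoint_left.2 fun ω h1 h2 => ?_) ?_
  · simp only [Set.mem_ofPred_eq] at h1 h2; omega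
  · simp only [Set.mem_union, Set.mem_ofPred_eq] at h1 h2; omega
  · intro ω h
    simp only [Set.mem_union, Set.mem_ofPred_eq] at h ⊢
    omega

lemma Pc_add_Pc_add_control_le (hY1 : Measurable Y1) (hY0 : Measurable Y0)
    (hM1 : Measurable M1) (hM0 : Measurable M0) (hy : y ≤ 1) :
    Pc μ Y1 Y0 M1 M0 (1 - y) y m m + Pc μ Y1 Y0 M1 M0 y y m m
      + μ.real {ω | Y0 ω = 1 - y ∧ M0 ω = m} ≤ μ.real {ω | M0 ω = m} := by
  refine measureReal_add_add_le_of_subset (by measurability) (by measurability)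
    (Set.disjoint_left.2 fun ω h1 h2 => ?_) (Set.disjoint_left.2 fun ω h1 h2 => ?_) ?_
  · simp only [Set.mem_ofPred_eq] at h1 h2; omega
  · simp only [Set.mem_union, Set.mem_ofPred_eq] at h1 h2; omega
  · intro ω h
    simp only [Set.mem_union, Set.mem_ofPred_eq] at h ⊢
    omega

lemma measureReal_inter_eq_sum_Pc (hY1 : Measurable Y1) (hY0 : Measurable Y0)
    (hY1bin : ∀ ω, Y1 ω ≤ 1) (hY0bin : ∀ ω, Y0 ω ≤ 1) (hy : y ≤ 1) :
    μ.real ({ω | M1 ω = m} ∩ {ω | M0 ω = m})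
      = Pc μ Y1 Y0 M1 M0 y (1 - y) m m + Pc μ Y1 Y0 M1 M0 (1 - y) y m m
        + Pc μ Y1 Y0 M1 M0 y y m m + Pc μ Y1 Y0 M1 M0 (1 - y) (1 - y) m m := by
  have hcell : ∀ y1 y0, Pc μ Y1 Y0 M1 M0 y1 y0 m m
      = μ.real ({ω | M1 ω = m} ∩ {ω | M0 ω = m} ∩ {ω | Y1 ω = y1} ∩ {ω | Y0 ω = y0}) := by
    intro y1 y0
    rw [Pc_eq_measureReal_inter]
    congr 1
    ext ω
    simp only [Set.mem_inter_iff, Set.mem_ofPred_eq]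
    tauto
  have hsplitY1 := measureReal_inter_eq_add_inter_eq_one_sub (μ := μ) hY1 hY1bin hy
    ({ω | M1 ω = m} ∩ {ω | M0 ω = m})
  have hsplitY0 := measureReal_inter_eq_add_inter_eq_one_sub (μ := μ) hY0 hY0bin hy
    ({ω | M1 ω = m} ∩ {ω | M0 ω = m} ∩ {ω | Y1 ω = 1 - y})
  have hsplitY0' := measureReal_inter_eq_add_inter_eq_one_sub (μ := μ) hY0 hY0bin
    (Nat.sub_le 1 y) ({ω | M1 ω = m} ∩ {ω | M0 ω = m} ∩ {ω | Y1 ω = y})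
  rw [Nat.sub_sub_self hy] at hsplitY0'
  rw [hcell, hcell, hcell, hcell]
  linarith

theorem counterfactual_bound (hY1 : Measurable Y1) (hY0 : Measurable Y0)
    (hM1 : Measurable M1) (hM0 : Measurable M0) (hY1bin : ∀ ω, Y1 ω ≤ 1)
    (hY0bin : ∀ ω, Y0 ω ≤ 1) (hM0bin : ∀ ω, M0 ω ≤ 1) (hy : y ≤ 1) (hm : m ≤ 1)
    (h : 1 < μ.real {ω | Y1 ω = y ∧ M1 ω = m} + μ.real {ω | Y0 ω = 1 - y ∧ M0 ω = m}) :
    0 < μ.real ({ω | M1 ω = m} ∩ {ω | M0 ω = m}) ∧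
    (μ.real {ω | Y1 ω = y ∧ M1 ω = m} + μ.real {ω | Y0 ω = 1 - y ∧ M0 ω = m} - 1)
        / (μ.real {ω | M1 ω = m} - μ.real {ω | M0 ω = 1 - m})
      ≤ (Pc μ Y1 Y0 M1 M0 y (1 - y) m m - Pc μ Y1 Y0 M1 M0 (1 - y) y m m)
        / μ.real ({ω | M1 ω = m} ∩ {ω | M0 ω = m}) := by
  have hcells := measureReal_inter_eq_sum_Pc (μ := μ) (M1 := M1) (M0 := M0) (m := m)
    hY1 hY0 hY1bin hY0bin hy
  have hbonferroni := treated_add_control_add_Pc_le (μ := μ) hY1 hY0 hM1 hM0 hy (m := m)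
  have htreated := Pc_add_Pc_add_treated_le (μ := μ) hY1 hY0 hM1 hM0 hy (m := m)
  have hcontrol := Pc_add_Pc_add_control_le (μ := μ) hY1 hY0 hM1 hM0 hy (m := m)
  have hM0split := measureReal_eq_add_measureReal_eq_one_sub (μ := μ) hM0 hM0bin hm
  have hnonneg : ∀ y1 y0, 0 ≤ Pc μ Y1 Y0 M1 M0 y1 y0 m m := fun _ _ ↦ ENNReal.toReal_nonneg
  set t := 2 * Pc μ Y1 Y0 M1 M0 (1 - y) y m m + Pc μ Y1 Y0 M1 M0 y y m m
    + Pc μ Y1 Y0 M1 M0 (1 - y) (1 - y) m m with ht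
  have hr : μ.real ({ω | M1 ω = m} ∩ {ω | M0 ω = m})
      = Pc μ Y1 Y0 M1 M0 y (1 - y) m m - Pc μ Y1 Y0 M1 M0 (1 - y) y m m + t := by
    rw [hcells, ht]
    ring
  have ht_nonneg : 0 ≤ t := by linarith [hnonneg (1 - y) y, hnonneg y y, hnonneg (1 - y) (1 - y)]
  rw [hr]
  exact ⟨by linarith, div_le_div_add_of_le (by linarith) (by linarith) ht_nonneg (by linarith)⟩

end CounterfactualBound

theorem statement4_general
    {Ω : Type*} [MeasurableSpace Ω] (μ : Measure Ω) [IsProbabilityMeasure μ]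
    (Y1 Y0 M1 M0 X Y M : Ω → ℕ)
    (hY1meas : Measurable Y1) (hY0meas : Measurable Y0)
    (hM1meas : Measurable M1) (hM0meas : Measurable M0)
    (hY1bin : ∀ ω, Y1 ω ≤ 1) (hY0bin : ∀ ω, Y0 ω ≤ 1)
    (hM0bin : ∀ ω, M0 ω ≤ 1)
    (hXbin : ∀ ω, X ω ≤ 1)
    (hXpos : 0 < μ {ω | X ω = 1}) (hXlt : μ {ω | X ω = 1} < 1)
    (hindep : IndepFun X (fun ω => (Y1 ω, Y0 ω, M1 ω, M0 ω)) μ)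
    (hYcons1 : ∀ ω, X ω = 1 → Y ω = Y1 ω)
    (hYcons0 : ∀ ω, X ω = 0 → Y ω = Y0 ω)
    (hMcons1 : ∀ ω, X ω = 1 → M ω = M1 ω)
    (hMcons0 : ∀ ω, X ω = 0 → M ω = M0 ω)
    (y m : ℕ) (hy : y ≤ 1) (hm : m ≤ 1)
    (hemp : condP μ {ω | Y ω = y ∧ M ω = m} {ω | X ω = 1}
        + condP μ {ω | Y ω = 1 - y ∧ M ω = m} {ω | X ω = 0} > 1) :
    0 < μ ({ω | M1 ω = m} ∩ {ω | M0 ω = m}) ∧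
    (condP μ {ω | Y ω = y ∧ M ω = m} {ω | X ω = 1}
        + condP μ {ω | Y ω = 1 - y ∧ M ω = m} {ω | X ω = 0} - 1)
      / (condP μ {ω | M ω = m} {ω | X ω = 1}
        - condP μ {ω | M ω = 1 - m} {ω | X ω = 0})
      ≤ (Pc μ Y1 Y0 M1 M0 y (1 - y) m m - Pc μ Y1 Y0 M1 M0 (1 - y) y m m)
        / (μ ({ω | M1 ω = m} ∩ {ω | M0 ω = m})).toReal ∧
    (Pc μ Y1 Y0 M1 M0 y (1 - y) m m - Pc μ Y1 Y0 M1 M0 (1 - y) y m m)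
        / (μ ({ω | M1 ω = m} ∩ {ω | M0 ω = m})).toReal
      = condP μ {ω | Y1 ω = y ∧ Y0 ω = 1 - y} {ω | M1 ω = m ∧ M0 ω = m}
        - condP μ {ω | Y1 ω = 1 - y ∧ Y0 ω = y} {ω | M1 ω = m ∧ M0 ω = m} := by
  have hX0 := measure_eq_zero_ne_zero_of_measure_eq_one_lt_one hXbin hXlt
  have ha : condP μ {ω | Y ω = y ∧ M ω = m} {ω | X ω = 1} = μ.real {ω | Y1 ω = y ∧ M1 ω = m} :=
    condP_eq_measureReal_of_indepFun hindep hXpos.ne' (S := {v | v.1 = y ∧ v.2.2.1 = m})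
      .of_discrete fun ω hx ↦ by rw [Set.mem_ofPred_eq, hYcons1 ω hx, hMcons1 ω hx]; rfl
  have hb : condP μ {ω | Y ω = 1 - y ∧ M ω = m} {ω | X ω = 0}
      = μ.real {ω | Y0 ω = 1 - y ∧ M0 ω = m} :=
    condP_eq_measureReal_of_indepFun hindep hX0 (S := {v | v.2.1 = 1 - y ∧ v.2.2.2 = m})
      .of_discrete fun ω hx ↦ by rw [Set.mem_ofPred_eq, hYcons0 ω hx, hMcons0 ω hx]; rfl
  have hp : condP μ {ω | M ω = m} {ω | X ω = 1} = μ.real {ω | M1 ω = m} :=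
    condP_eq_measureReal_of_indepFun hindep hXpos.ne' (S := {v | v.2.2.1 = m})
      .of_discrete fun ω hx ↦ by rw [Set.mem_ofPred_eq, hMcons1 ω hx]; rfl
  have hq : condP μ {ω | M ω = 1 - m} {ω | X ω = 0} = μ.real {ω | M0 ω = 1 - m} :=
    condP_eq_measureReal_of_indepFun hindep hX0 (S := {v | v.2.2.2 = 1 - m})
      .of_discrete fun ω hx ↦ by rw [Set.mem_ofPred_eq, hMcons0 ω hx]; rfl
  rw [ha, hb] at hemp
  obtain ⟨hr, hbound⟩ := counterfactual_bound hY1meas hY0meas hM1meas hM0meas hY1bin hY0bin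
    hM0bin hy hm hemp
  refine ⟨(ENNReal.toReal_pos_iff.1 hr).1, by rwa [ha, hb, hp, hq], ?_⟩
  rw [sub_div]
  exact congrArg₂ _ (Pc_div_eq_condP ..) (Pc_div_eq_condP ..)

theorem statement4
    {Ω : Type*} [MeasurableSpace Ω] (μ : Measure Ω) [IsProbabilityMeasure μ]
    (Y1 Y0 M1 M0 X Y M : Ω → ℕ)
    (hY1meas : Measurable Y1) (hY0meas : Measurable Y0)
    (hM1meas : Measurable M1) (hM0meas : Measurable M0)
    (hXmeas : Measurable X)
    (hY1bin : ∀ ω, Y1 ω ≤ 1) (hY0bin : ∀ ω, Y0 ω ≤ 1)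
    (hM1bin : ∀ ω, M1 ω ≤ 1) (hM0bin : ∀ ω, M0 ω ≤ 1)
    (hXbin : ∀ ω, X ω ≤ 1)
    (hXpos : 0 < μ {ω | X ω = 1}) (hXlt : μ {ω | X ω = 1} < 1)
    (hindep : IndepFun X (fun ω => (Y1 ω, Y0 ω, M1 ω, M0 ω)) μ)
    (hYcons1 : ∀ ω, X ω = 1 → Y ω = Y1 ω)
    (hYcons0 : ∀ ω, X ω = 0 → Y ω = Y0 ω)
    (hMcons1 : ∀ ω, X ω = 1 → M ω = M1 ω)
    (hMcons0 : ∀ ω, X ω = 0 → M ω = M0 ω)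
    (y m : ℕ) (hy : y ≤ 1) (hm : m ≤ 1)
    (hemp : condP μ {ω | Y ω = y ∧ M ω = m} {ω | X ω = 1}
        + condP μ {ω | Y ω = 1 - y ∧ M ω = m} {ω | X ω = 0} > 1) :
    0 < μ ({ω | M1 ω = m} ∩ {ω | M0 ω = m}) ∧
    (condP μ {ω | Y ω = y ∧ M ω = m} {ω | X ω = 1}
        + condP μ {ω | Y ω = 1 - y ∧ M ω = m} {ω | X ω = 0} - 1)
      / (condP μ {ω | M ω = m} {ω | X ω = 1}
        - condP μ {ω | M ω = 1 - m} {ω | X ω = 0})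
      ≤ (Pc μ Y1 Y0 M1 M0 y (1 - y) m m - Pc μ Y1 Y0 M1 M0 (1 - y) y m m)
        / (μ ({ω | M1 ω = m} ∩ {ω | M0 ω = m})).toReal ∧
    (Pc μ Y1 Y0 M1 M0 y (1 - y) m m - Pc μ Y1 Y0 M1 M0 (1 - y) y m m)
        / (μ ({ω | M1 ω = m} ∩ {ω | M0 ω = m})).toReal
      = condP μ {ω | Y1 ω = y ∧ Y0 ω = 1 - y} {ω | M1 ω = m ∧ M0 ω = m}
        - condP μ {ω | Y1 ω = 1 - y ∧ Y0 ω = y} {ω | M1 ω = m ∧ M0 ω = m} :=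
  statement4_general μ Y1 Y0 M1 M0 X Y M hY1meas hY0meas hM1meas hM0meas hY1bin hY0bin hM0bin hXbin
    hXpos hXlt hindep hYcons1 hYcons0 hMcons1 hMcons0 y m hy hm hemp
end

section
/- Assume positive monotonicity: M1(ω) ≥ M0(ω) for every ω ∈ Ω. For every y ∈ {0,1} and m ∈ {0,1}: P(Y=1−y, M=m | X=1−m) − P(Y=1−y, M=m | X=m) = P_c(y·m+(1−y)·(1−m), (1−y)·m+(1−m)·y, m, m) − P_c(m·(1−y)+(1−m)·y, y·m+(1−y)·(1−m), m, m) − P_c(m·(1−y)+(1−m)·y, y·m+(1−y)·(1−m), 1, 0) − P_c(1−y, 1−y, 1, 0). -/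
open MeasureTheory ProbabilityTheory

lemma split_aux {Ω : Type*} [MeasurableSpace Ω] (μ : Measure Ω)
    (f : Ω → ℕ) (hf : Measurable f) (hfb : ∀ ω, f ω ≤ 1)
    (T : Set Ω) (hT : MeasurableSet T) :
    μ T = μ (T ∩ {ω | f ω = 0}) + μ (T ∩ {ω | f ω = 1}) := by
  have hdisj : Disjoint (T ∩ {ω | f ω = 0}) (T ∩ {ω | f ω = 1}) := by
    rw [Set.disjoint_left]
    rintro ω ⟨_, h0⟩ ⟨_, h1⟩
    simp only [Set.mem_setOf_eq] at h0 h1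
    omega
  have hmeas : MeasurableSet (T ∩ {ω | f ω = 1}) :=
    hT.inter (hf (measurableSet_singleton 1))
  rw [← measure_union hdisj hmeas]
  congr 1
  ext ω
  simp only [Set.mem_union, Set.mem_inter_iff, Set.mem_setOf_eq]
  have h2 : f ω = 0 ∨ f ω = 1 := by have := hfb ω; omega
  tauto

lemma condP_eq {Ω : Type*} [MeasurableSpace Ω] (μ : Measure Ω) [IsProbabilityMeasure μ]
    (W : Ω → ℕ × ℕ × ℕ × ℕ) (X Y M Yx Mx : Ω → ℕ)
    (hindep : IndepFun X W μ) (x a b : ℕ)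
    (hYc : ∀ ω, X ω = x → Y ω = Yx ω) (hMc : ∀ ω, X ω = x → M ω = Mx ω)
    (S : Set (ℕ × ℕ × ℕ × ℕ))
    (hset : {ω | Yx ω = a ∧ Mx ω = b} = W ⁻¹' S)
    (hXne : μ {ω | X ω = x} ≠ 0) :
    condP μ {ω | Y ω = a ∧ M ω = b} {ω | X ω = x}
      = (μ {ω | Yx ω = a ∧ Mx ω = b}).toReal := by
  have hseteq : {ω | Y ω = a ∧ M ω = b} ∩ {ω | X ω = x}
      = {ω | Yx ω = a ∧ Mx ω = b} ∩ {ω | X ω = x} := by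
    ext ω
    simp only [Set.mem_inter_iff, Set.mem_setOf_eq]
    constructor
    · rintro ⟨⟨h1, h2⟩, hx⟩
      exact ⟨⟨by rw [← hYc ω hx]; exact h1, by rw [← hMc ω hx]; exact h2⟩, hx⟩
    · rintro ⟨⟨h1, h2⟩, hx⟩
      exact ⟨⟨by rw [hYc ω hx]; exact h1, by rw [hMc ω hx]; exact h2⟩, hx⟩
  have hXset : {ω | X ω = x} = X ⁻¹' {x} := rfl
  have hmul : μ ({ω | Yx ω = a ∧ Mx ω = b} ∩ {ω | X ω = x})
      = μ {ω | Yx ω = a ∧ Mx ω = b} * μ {ω | X ω = x} := by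
    rw [hset, hXset, Set.inter_comm,
      hindep.measure_inter_preimage_eq_mul {x} S (measurableSet_singleton x)
        ((Set.to_countable S).measurableSet)]
    ring
  rw [condP, hseteq, hmul, ENNReal.toReal_mul, mul_div_assoc, div_self, mul_one]
  exact ENNReal.toReal_ne_zero.mpr ⟨hXne, measure_ne_top μ _⟩

lemma marg_split1 {Ω : Type*} [MeasurableSpace Ω] (μ : Measure Ω) [IsProbabilityMeasure μ]
    (Y1 Y0 M1 M0 : Ω → ℕ) (hY1 : Measurable Y1) (hY0 : Measurable Y0)
    (hM1 : Measurable M1) (hM0 : Measurable M0)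
    (hY0b : ∀ ω, Y0 ω ≤ 1) (hM0b : ∀ ω, M0 ω ≤ 1) (a b : ℕ) :
    (μ {ω | Y1 ω = a ∧ M1 ω = b}).toReal =
      Pc μ Y1 Y0 M1 M0 a 0 b 0 + Pc μ Y1 Y0 M1 M0 a 0 b 1
        + Pc μ Y1 Y0 M1 M0 a 1 b 0 + Pc μ Y1 Y0 M1 M0 a 1 b 1 := by
  have hT : MeasurableSet {ω | Y1 ω = a ∧ M1 ω = b} :=
    (hY1 (measurableSet_singleton a)).inter (hM1 (measurableSet_singleton b))
  have e : ∀ i j : ℕ, ({ω | Y1 ω = a ∧ M1 ω = b} ∩ {ω | Y0 ω = i}) ∩ {ω | M0 ω = j}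
      = {ω | Y1 ω = a ∧ Y0 ω = i ∧ M1 ω = b ∧ M0 ω = j} := by
    intro i j; ext ω
    simp only [Set.mem_inter_iff, Set.mem_setOf_eq]
    tauto
  rw [split_aux μ Y0 hY0 hY0b _ hT,
    split_aux μ M0 hM0 hM0b ({ω | Y1 ω = a ∧ M1 ω = b} ∩ {ω | Y0 ω = 0})
      (hT.inter (hY0 (measurableSet_singleton 0))),
    split_aux μ M0 hM0 hM0b ({ω | Y1 ω = a ∧ M1 ω = b} ∩ {ω | Y0 ω = 1})
      (hT.inter (hY0 (measurableSet_singleton 1))),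
    e 0 0, e 0 1, e 1 0, e 1 1,
    ENNReal.toReal_add (ENNReal.add_ne_top.2 ⟨measure_ne_top μ _, measure_ne_top μ _⟩)
      (ENNReal.add_ne_top.2 ⟨measure_ne_top μ _, measure_ne_top μ _⟩),
    ENNReal.toReal_add (measure_ne_top μ _) (measure_ne_top μ _),
    ENNReal.toReal_add (measure_ne_top μ _) (measure_ne_top μ _)]
  simp only [Pc]
  ring

lemma marg_split0 {Ω : Type*} [MeasurableSpace Ω] (μ : Measure Ω) [IsProbabilityMeasure μ]
    (Y1 Y0 M1 M0 : Ω → ℕ) (hY1 : Measurable Y1) (hY0 : Measurable Y0)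
    (hM1 : Measurable M1) (hM0 : Measurable M0)
    (hY1b : ∀ ω, Y1 ω ≤ 1) (hM1b : ∀ ω, M1 ω ≤ 1) (a b : ℕ) :
    (μ {ω | Y0 ω = a ∧ M0 ω = b}).toReal =
      Pc μ Y1 Y0 M1 M0 0 a 0 b + Pc μ Y1 Y0 M1 M0 0 a 1 b
        + Pc μ Y1 Y0 M1 M0 1 a 0 b + Pc μ Y1 Y0 M1 M0 1 a 1 b := by
  have hT : MeasurableSet {ω | Y0 ω = a ∧ M0 ω = b} :=
    (hY0 (measurableSet_singleton a)).inter (hM0 (measurableSet_singleton b))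
  have e : ∀ i j : ℕ, ({ω | Y0 ω = a ∧ M0 ω = b} ∩ {ω | Y1 ω = i}) ∩ {ω | M1 ω = j}
      = {ω | Y1 ω = i ∧ Y0 ω = a ∧ M1 ω = j ∧ M0 ω = b} := by
    intro i j; ext ω
    simp only [Set.mem_inter_iff, Set.mem_setOf_eq]
    tauto
  rw [split_aux μ Y1 hY1 hY1b _ hT,
    split_aux μ M1 hM1 hM1b ({ω | Y0 ω = a ∧ M0 ω = b} ∩ {ω | Y1 ω = 0})
      (hT.inter (hY1 (measurableSet_singleton 0))),
    split_aux μ M1 hM1 hM1b ({ω | Y0 ω = a ∧ M0 ω = b} ∩ {ω | Y1 ω = 1})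
      (hT.inter (hY1 (measurableSet_singleton 1))),
    e 0 0, e 0 1, e 1 0, e 1 1,
    ENNReal.toReal_add (ENNReal.add_ne_top.2 ⟨measure_ne_top μ _, measure_ne_top μ _⟩)
      (ENNReal.add_ne_top.2 ⟨measure_ne_top μ _, measure_ne_top μ _⟩),
    ENNReal.toReal_add (measure_ne_top μ _) (measure_ne_top μ _),
    ENNReal.toReal_add (measure_ne_top μ _) (measure_ne_top μ _)]
  simp only [Pc]
  ring

lemma Pc_mono_zero {Ω : Type*} [MeasurableSpace Ω] (μ : Measure Ω)
    (Y1 Y0 M1 M0 : Ω → ℕ) (hmono : ∀ ω, M0 ω ≤ M1 ω) (y1 y0 : ℕ) :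
    Pc μ Y1 Y0 M1 M0 y1 y0 0 1 = 0 := by
  have h : {ω | Y1 ω = y1 ∧ Y0 ω = y0 ∧ M1 ω = 0 ∧ M0 ω = 1} = (∅ : Set Ω) := by
    ext ω
    simp only [Set.mem_setOf_eq, Set.mem_empty_iff_false, iff_false]
    rintro ⟨_, _, h1, h0⟩
    have := hmono ω
    omega
  simp [Pc, h]

theorem statement7
    {Ω : Type*} [MeasurableSpace Ω] (μ : Measure Ω) [IsProbabilityMeasure μ]
    (Y1 Y0 M1 M0 X Y M : Ω → ℕ)
    (hY1meas : Measurable Y1) (hY0meas : Measurable Y0)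
    (hM1meas : Measurable M1) (hM0meas : Measurable M0)
    (hXmeas : Measurable X)
    (hY1bin : ∀ ω, Y1 ω ≤ 1) (hY0bin : ∀ ω, Y0 ω ≤ 1)
    (hM1bin : ∀ ω, M1 ω ≤ 1) (hM0bin : ∀ ω, M0 ω ≤ 1)
    (hXbin : ∀ ω, X ω ≤ 1)
    (hXpos : 0 < μ {ω | X ω = 1}) (hXlt : μ {ω | X ω = 1} < 1)
    (hindep : IndepFun X (fun ω => (Y1 ω, Y0 ω, M1 ω, M0 ω)) μ)
    (hYcons1 : ∀ ω, X ω = 1 → Y ω = Y1 ω)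
    (hYcons0 : ∀ ω, X ω = 0 → Y ω = Y0 ω)
    (hMcons1 : ∀ ω, X ω = 1 → M ω = M1 ω)
    (hMcons0 : ∀ ω, X ω = 0 → M ω = M0 ω)
    (hmono : ∀ ω, M0 ω ≤ M1 ω)
    (y m : ℕ) (hy : y ≤ 1) (hm : m ≤ 1)
    :
    condP μ {ω | Y ω = 1 - y ∧ M ω = m} {ω | X ω = 1 - m}
      - condP μ {ω | Y ω = 1 - y ∧ M ω = m} {ω | X ω = m}
    = Pc μ Y1 Y0 M1 M0 (y * m + (1 - y) * (1 - m)) ((1 - y) * m + (1 - m) * y) m m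
      - Pc μ Y1 Y0 M1 M0 (m * (1 - y) + (1 - m) * y) (y * m + (1 - y) * (1 - m)) m m
      - Pc μ Y1 Y0 M1 M0 (m * (1 - y) + (1 - m) * y) (y * m + (1 - y) * (1 - m)) 1 0
      - Pc μ Y1 Y0 M1 M0 (1 - y) (1 - y) 1 0 := by
  have hX1ne : μ {ω | X ω = 1} ≠ 0 := hXpos.ne'
  have hX0ne : μ {ω | X ω = 0} ≠ 0 := by
    intro h
    have hc : {ω | X ω = 1} = {ω | X ω = 0}ᶜ := by
      ext ω
      simp only [Set.mem_compl_iff, Set.mem_setOf_eq]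
      have := hXbin ω
      omega
    have hms : MeasurableSet {ω | X ω = 0} := hXmeas (measurableSet_singleton 0)
    have h1 : μ {ω | X ω = 1} = 1 := by
      rw [hc, measure_compl hms (measure_ne_top μ _), h]
      simp
    exact absurd h1 hXlt.ne
  have hc1 : ∀ a b : ℕ, condP μ {ω | Y ω = a ∧ M ω = b} {ω | X ω = 1}
      = (μ {ω | Y1 ω = a ∧ M1 ω = b}).toReal := fun a b =>
    condP_eq μ _ X Y M Y1 M1 hindep 1 a b hYcons1 hMcons1
      {p | p.1 = a ∧ p.2.2.1 = b} rfl hX1ne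
  have hc0 : ∀ a b : ℕ, condP μ {ω | Y ω = a ∧ M ω = b} {ω | X ω = 0}
      = (μ {ω | Y0 ω = a ∧ M0 ω = b}).toReal := fun a b =>
    condP_eq μ _ X Y M Y0 M0 hindep 0 a b hYcons0 hMcons0
      {p | p.2.1 = a ∧ p.2.2.2 = b} rfl hX0ne
  have hm1 := marg_split1 μ Y1 Y0 M1 M0 hY1meas hY0meas hM1meas hM0meas hY0bin hM0bin
  have hm0 := marg_split0 μ Y1 Y0 M1 M0 hY1meas hY0meas hM1meas hM0meas hY1bin hM1bin
  have hz := Pc_mono_zero μ Y1 Y0 M1 M0 hmono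
  interval_cases y <;> interval_cases m <;> norm_num <;>
    (rw [hc1, hc0, hm1, hm0]; simp only [hz]; ring)
end

section
/- Assume positive monotonicity: M1(ω) ≥ M0(ω) for every ω ∈ Ω. For every y ∈ {0,1} and m ∈ {0,1}: P(Y=1−y, M=m | X=1−m) − P(Y=1−y, M=m | X=m) ≤ P_c(y·m+(1−y)·(1−m), (1−y)·m+(1−m)·y, m, m) − P_c(m·(1−y)+(1−m)·y, y·m+(1−y)·(1−m), m, m). -/
open MeasureTheory ProbabilityTheory

lemma condP_indep_eq {Ω : Type*} [MeasurableSpace Ω] (μ : Measure Ω) [IsProbabilityMeasure μ]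
    (X : Ω → ℕ) (T : Ω → ℕ × ℕ × ℕ × ℕ)
    (hindep : IndepFun X T μ) (x : ℕ) (hx : μ {ω | X ω = x} ≠ 0)
    (A : Set Ω) (s : Set (ℕ × ℕ × ℕ × ℕ)) (hs : MeasurableSet s)
    (hA : A ∩ {ω | X ω = x} = T ⁻¹' s ∩ {ω | X ω = x}) :
    condP μ A {ω | X ω = x} = (μ (T ⁻¹' s)).toReal := by
  have h1 : μ (A ∩ {ω | X ω = x}) = μ (T ⁻¹' s) * μ {ω | X ω = x} := by
    rw [hA]
    have hXset : {ω | X ω = x} = X ⁻¹' {x} := rfl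
    rw [hXset, Set.inter_comm,
      hindep.measure_inter_preimage_eq_mul _ _ (measurableSet_singleton x) hs, mul_comm]
  have hfin : μ {ω | X ω = x} ≠ ⊤ := measure_ne_top μ _
  rw [condP, h1, ENNReal.toReal_mul, mul_div_assoc, div_self, mul_one]
  exact ENNReal.toReal_ne_zero.mpr ⟨hx, hfin⟩

lemma main_ineq {Ω : Type*} [MeasurableSpace Ω] (μ : Measure Ω) [IsProbabilityMeasure μ]
    {P Q E F : Set Ω} (hP : MeasurableSet P) (hQ : MeasurableSet Q) (hE : MeasurableSet E)
    (hEF : E ⊆ F) :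
    (μ (P ∩ E)).toReal - (μ (Q ∩ F)).toReal
      ≤ (μ (P ∩ Qᶜ ∩ E)).toReal - (μ (Q ∩ Pᶜ ∩ E)).toReal := by
  have h1 : μ (P ∩ E) = μ (P ∩ Qᶜ ∩ E) + μ (P ∩ Q ∩ E) := by
    rw [← measure_union]
    · congr 1; ext ω; simp only [Set.mem_union, Set.mem_inter_iff, Set.mem_compl_iff]; tauto
    · rw [Set.disjoint_left]; intro ω h1 h2
      exact h1.1.2 h2.1.2
    · exact (hP.inter hQ).inter hE
  have h2 : μ (Q ∩ Pᶜ ∩ E) + μ (Q ∩ P ∩ E) = μ (Q ∩ E) := by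
    rw [← measure_union]
    · congr 1; ext ω; simp only [Set.mem_union, Set.mem_inter_iff, Set.mem_compl_iff]; tauto
    · rw [Set.disjoint_left]; intro ω h1 h2
      exact h1.1.2 h2.1.2
    · exact (hQ.inter hP).inter hE
  have h3 : μ (Q ∩ E) ≤ μ (Q ∩ F) := measure_mono (Set.inter_subset_inter_right _ hEF)
  have e1 : (μ (P ∩ E)).toReal = (μ (P ∩ Qᶜ ∩ E)).toReal + (μ (P ∩ Q ∩ E)).toReal := by
    rw [h1, ENNReal.toReal_add (measure_ne_top μ _) (measure_ne_top μ _)]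
  have e2 : (μ (Q ∩ Pᶜ ∩ E)).toReal + (μ (Q ∩ P ∩ E)).toReal = (μ (Q ∩ E)).toReal := by
    rw [← ENNReal.toReal_add (measure_ne_top μ _) (measure_ne_top μ _), h2]
  have e3 : (μ (Q ∩ E)).toReal ≤ (μ (Q ∩ F)).toReal :=
    ENNReal.toReal_mono (measure_ne_top μ _) h3
  have e4 : (μ (P ∩ Q ∩ E)).toReal = (μ (Q ∩ P ∩ E)).toReal := by rw [Set.inter_comm P Q]
  linarith

theorem statement8
    {Ω : Type*} [MeasurableSpace Ω] (μ : Measure Ω) [IsProbabilityMeasure μ]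
    (Y1 Y0 M1 M0 X Y M : Ω → ℕ)
    (hY1meas : Measurable Y1) (hY0meas : Measurable Y0)
    (hM1meas : Measurable M1) (hM0meas : Measurable M0)
    (hXmeas : Measurable X)
    (hY1bin : ∀ ω, Y1 ω ≤ 1) (hY0bin : ∀ ω, Y0 ω ≤ 1)
    (hM1bin : ∀ ω, M1 ω ≤ 1) (hM0bin : ∀ ω, M0 ω ≤ 1)
    (hXbin : ∀ ω, X ω ≤ 1)
    (hXpos : 0 < μ {ω | X ω = 1}) (hXlt : μ {ω | X ω = 1} < 1)
    (hindep : IndepFun X (fun ω => (Y1 ω, Y0 ω, M1 ω, M0 ω)) μ)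
    (hYcons1 : ∀ ω, X ω = 1 → Y ω = Y1 ω)
    (hYcons0 : ∀ ω, X ω = 0 → Y ω = Y0 ω)
    (hMcons1 : ∀ ω, X ω = 1 → M ω = M1 ω)
    (hMcons0 : ∀ ω, X ω = 0 → M ω = M0 ω)
    (hmono : ∀ ω, M0 ω ≤ M1 ω)
    (y m : ℕ) (hy : y ≤ 1) (hm : m ≤ 1)
    :
    condP μ {ω | Y ω = 1 - y ∧ M ω = m} {ω | X ω = 1 - m}
      - condP μ {ω | Y ω = 1 - y ∧ M ω = m} {ω | X ω = m}
    ≤ Pc μ Y1 Y0 M1 M0 (y * m + (1 - y) * (1 - m)) ((1 - y) * m + (1 - m) * y) m m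
      - Pc μ Y1 Y0 M1 M0 (m * (1 - y) + (1 - m) * y) (y * m + (1 - y) * (1 - m)) m m := by
  have hx1 : μ {ω | X ω = 1} ≠ 0 := hXpos.ne'
  have hx0 : μ {ω | X ω = 0} ≠ 0 := by
    have hcompl : {ω | X ω = 0} = {ω | X ω = 1}ᶜ := by
      ext ω; have := hXbin ω; simp only [Set.mem_setOf_eq, Set.mem_compl_iff]; omega
    have hms : MeasurableSet {ω | X ω = 1} := hXmeas (measurableSet_singleton 1)
    rw [hcompl, prob_compl_eq_one_sub hms]
    intro h
    exact absurd (tsub_eq_zero_iff_le.mp h) (not_le.mpr hXlt)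
  -- conditional probabilities via independence
  have hC1 : ∀ a b : ℕ, condP μ {ω | Y ω = a ∧ M ω = b} {ω | X ω = 1}
      = (μ {ω | Y1 ω = a ∧ M1 ω = b}).toReal := by
    intro a b
    exact condP_indep_eq μ X _ hindep 1 hx1 {ω | Y ω = a ∧ M ω = b}
      {p | p.1 = a ∧ p.2.2.1 = b}
      ((measurable_fst (measurableSet_singleton a)).inter
        ((measurable_fst.comp (measurable_snd.comp measurable_snd))
          (measurableSet_singleton b)))
      (by
        ext ω
        simp only [Set.mem_inter_iff, Set.mem_setOf_eq, Set.mem_preimage]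
        constructor
        · rintro ⟨⟨h1, h2⟩, h3⟩
          exact ⟨⟨by rw [← hYcons1 ω h3]; exact h1, by rw [← hMcons1 ω h3]; exact h2⟩, h3⟩
        · rintro ⟨⟨h1, h2⟩, h3⟩
          exact ⟨⟨by rw [hYcons1 ω h3]; exact h1, by rw [hMcons1 ω h3]; exact h2⟩, h3⟩)
  have hC0 : ∀ a b : ℕ, condP μ {ω | Y ω = a ∧ M ω = b} {ω | X ω = 0}
      = (μ {ω | Y0 ω = a ∧ M0 ω = b}).toReal := by
    intro a b
    exact condP_indep_eq μ X _ hindep 0 hx0 {ω | Y ω = a ∧ M ω = b}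
      {p | p.2.1 = a ∧ p.2.2.2 = b}
      (((measurable_fst.comp measurable_snd) (measurableSet_singleton a)).inter
        ((measurable_snd.comp (measurable_snd.comp measurable_snd))
          (measurableSet_singleton b)))
      (by
        ext ω
        simp only [Set.mem_inter_iff, Set.mem_setOf_eq, Set.mem_preimage]
        constructor
        · rintro ⟨⟨h1, h2⟩, h3⟩
          exact ⟨⟨by rw [← hYcons0 ω h3]; exact h1, by rw [← hMcons0 ω h3]; exact h2⟩, h3⟩
        · rintro ⟨⟨h1, h2⟩, h3⟩
          exact ⟨⟨by rw [hYcons0 ω h3]; exact h1, by rw [hMcons0 ω h3]; exact h2⟩, h3⟩)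
  -- measurability of basic sets
  have mY1 : ∀ a : ℕ, MeasurableSet {ω | Y1 ω = a} :=
    fun a => hY1meas (measurableSet_singleton a)
  have mY0 : ∀ a : ℕ, MeasurableSet {ω | Y0 ω = a} :=
    fun a => hY0meas (measurableSet_singleton a)
  have mE : ∀ a : ℕ, MeasurableSet ({ω | M1 ω = a} ∩ {ω | M0 ω = a}) :=
    fun a => (hM1meas (measurableSet_singleton a)).inter (hM0meas (measurableSet_singleton a))
  interval_cases y <;> interval_cases m <;>
    simp only [Nat.sub_zero, Nat.sub_self, mul_zero, zero_mul, mul_one, one_mul,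
      add_zero, zero_add, Pc] <;> norm_num
  -- case y = 0, m = 0
  · rw [hC1 1 0, hC0 1 0]
    have key := main_ineq μ (mY1 1) (mY0 1) (mE 0)
      (Set.inter_subset_right : ({ω | M1 ω = 0} ∩ {ω | M0 ω = 0}) ⊆ {ω | M0 ω = 0})
    have s1 : {ω | Y1 ω = 1 ∧ M1 ω = 0} = {ω | Y1 ω = 1} ∩ ({ω | M1 ω = 0} ∩ {ω | M0 ω = 0}) := by
      ext ω; have := hmono ω
      simp only [Set.mem_setOf_eq, Set.mem_inter_iff]; omega
    have s2 : {ω | Y0 ω = 1 ∧ M0 ω = 0} = {ω | Y0 ω = 1} ∩ {ω | M0 ω = 0} := by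
      ext ω; simp [Set.mem_setOf_eq, Set.mem_inter_iff]
    have s3 : {ω | Y1 ω = 1 ∧ Y0 ω = 0 ∧ M1 ω = 0 ∧ M0 ω = 0}
        = {ω | Y1 ω = 1} ∩ {ω | Y0 ω = 1}ᶜ ∩ ({ω | M1 ω = 0} ∩ {ω | M0 ω = 0}) := by
      ext ω; have := hY0bin ω
      simp only [Set.mem_setOf_eq, Set.mem_inter_iff, Set.mem_compl_iff]; omega
    have s4 : {ω | Y1 ω = 0 ∧ Y0 ω = 1 ∧ M1 ω = 0 ∧ M0 ω = 0}
        = {ω | Y0 ω = 1} ∩ {ω | Y1 ω = 1}ᶜ ∩ ({ω | M1 ω = 0} ∩ {ω | M0 ω = 0}) := by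
      ext ω; have := hY1bin ω
      simp only [Set.mem_setOf_eq, Set.mem_inter_iff, Set.mem_compl_iff]; omega
    rw [s1, s2, s3, s4]; linarith [key]
  -- case y = 0, m = 1
  · rw [hC1 1 1, hC0 1 1]
    have key := main_ineq μ (mY0 1) (mY1 1) (mE 1)
      (Set.inter_subset_left : ({ω | M1 ω = 1} ∩ {ω | M0 ω = 1}) ⊆ {ω | M1 ω = 1})
    have s1 : {ω | Y0 ω = 1 ∧ M0 ω = 1} = {ω | Y0 ω = 1} ∩ ({ω | M1 ω = 1} ∩ {ω | M0 ω = 1}) := by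
      ext ω; have := hmono ω; have := hM1bin ω
      simp only [Set.mem_setOf_eq, Set.mem_inter_iff]; omega
    have s2 : {ω | Y1 ω = 1 ∧ M1 ω = 1} = {ω | Y1 ω = 1} ∩ {ω | M1 ω = 1} := by
      ext ω; simp [Set.mem_setOf_eq, Set.mem_inter_iff]
    have s3 : {ω | Y1 ω = 0 ∧ Y0 ω = 1 ∧ M1 ω = 1 ∧ M0 ω = 1}
        = {ω | Y0 ω = 1} ∩ {ω | Y1 ω = 1}ᶜ ∩ ({ω | M1 ω = 1} ∩ {ω | M0 ω = 1}) := by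
      ext ω; have := hY1bin ω
      simp only [Set.mem_setOf_eq, Set.mem_inter_iff, Set.mem_compl_iff]; omega
    have s4 : {ω | Y1 ω = 1 ∧ Y0 ω = 0 ∧ M1 ω = 1 ∧ M0 ω = 1}
        = {ω | Y1 ω = 1} ∩ {ω | Y0 ω = 1}ᶜ ∩ ({ω | M1 ω = 1} ∩ {ω | M0 ω = 1}) := by
      ext ω; have := hY0bin ω
      simp only [Set.mem_setOf_eq, Set.mem_inter_iff, Set.mem_compl_iff]; omega
    rw [s1, s2, s3, s4]; linarith [key]
  -- case y = 1, m = 0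
  · rw [hC1 0 0, hC0 0 0]
    have key := main_ineq μ (mY1 0) (mY0 0) (mE 0)
      (Set.inter_subset_right : ({ω | M1 ω = 0} ∩ {ω | M0 ω = 0}) ⊆ {ω | M0 ω = 0})
    have s1 : {ω | Y1 ω = 0 ∧ M1 ω = 0} = {ω | Y1 ω = 0} ∩ ({ω | M1 ω = 0} ∩ {ω | M0 ω = 0}) := by
      ext ω; have := hmono ω
      simp only [Set.mem_setOf_eq, Set.mem_inter_iff]; omega
    have s2 : {ω | Y0 ω = 0 ∧ M0 ω = 0} = {ω | Y0 ω = 0} ∩ {ω | M0 ω = 0} := by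
      ext ω; simp [Set.mem_setOf_eq, Set.mem_inter_iff]
    have s3 : {ω | Y1 ω = 0 ∧ Y0 ω = 1 ∧ M1 ω = 0 ∧ M0 ω = 0}
        = {ω | Y1 ω = 0} ∩ {ω | Y0 ω = 0}ᶜ ∩ ({ω | M1 ω = 0} ∩ {ω | M0 ω = 0}) := by
      ext ω; have := hY0bin ω
      simp only [Set.mem_setOf_eq, Set.mem_inter_iff, Set.mem_compl_iff]; omega
    have s4 : {ω | Y1 ω = 1 ∧ Y0 ω = 0 ∧ M1 ω = 0 ∧ M0 ω = 0}
        = {ω | Y0 ω = 0} ∩ {ω | Y1 ω = 0}ᶜ ∩ ({ω | M1 ω = 0} ∩ {ω | M0 ω = 0}) := by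
      ext ω; have := hY1bin ω
      simp only [Set.mem_setOf_eq, Set.mem_inter_iff, Set.mem_compl_iff]; omega
    rw [s1, s2, s3, s4]; linarith [key]
  -- case y = 1, m = 1
  · rw [hC1 0 1, hC0 0 1]
    have key := main_ineq μ (mY0 0) (mY1 0) (mE 1)
      (Set.inter_subset_left : ({ω | M1 ω = 1} ∩ {ω | M0 ω = 1}) ⊆ {ω | M1 ω = 1})
    have s1 : {ω | Y0 ω = 0 ∧ M0 ω = 1} = {ω | Y0 ω = 0} ∩ ({ω | M1 ω = 1} ∩ {ω | M0 ω = 1}) := by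
      ext ω; have := hmono ω; have := hM1bin ω
      simp only [Set.mem_setOf_eq, Set.mem_inter_iff]; omega
    have s2 : {ω | Y1 ω = 0 ∧ M1 ω = 1} = {ω | Y1 ω = 0} ∩ {ω | M1 ω = 1} := by
      ext ω; simp [Set.mem_setOf_eq, Set.mem_inter_iff]
    have s3 : {ω | Y1 ω = 1 ∧ Y0 ω = 0 ∧ M1 ω = 1 ∧ M0 ω = 1}
        = {ω | Y0 ω = 0} ∩ {ω | Y1 ω = 0}ᶜ ∩ ({ω | M1 ω = 1} ∩ {ω | M0 ω = 1}) := by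
      ext ω; have := hY1bin ω
      simp only [Set.mem_setOf_eq, Set.mem_inter_iff, Set.mem_compl_iff]; omega
    have s4 : {ω | Y1 ω = 0 ∧ Y0 ω = 1 ∧ M1 ω = 1 ∧ M0 ω = 1}
        = {ω | Y1 ω = 0} ∩ {ω | Y0 ω = 0}ᶜ ∩ ({ω | M1 ω = 1} ∩ {ω | M0 ω = 1}) := by
      ext ω; have := hY0bin ω
      simp only [Set.mem_setOf_eq, Set.mem_inter_iff, Set.mem_compl_iff]; omega
    rw [s1, s2, s3, s4]; linarith [key]
end

section
/- Assume positive monotonicity: M1(ω) ≥ M0(ω) for every ω ∈ Ω. For every y ∈ {0,1} and m ∈ {0,1}: if P(Y=1−y, M=m | X=1−m) > P(Y=1−y, M=m | X=m), then μ({M1=m} ∩ {M0=m}) > 0 and [P(Y=1−y, M=m | X=1−m) − P(Y=1−y, M=m | X=m)] / P(M=m | X=0) ≤ [P_c(y·m+(1−y)·(1−m), (1−y)·m+(1−m)·y, m, m) − P_c(m·(1−y)+(1−m)·y, y·m+(1−y)·(1−m), m, m)] / μ({M1=m} ∩ {M0=m}); moreover the right-hand side equals P(Y1=y·m+(1−y)·(1−m),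 Y0=(1−y)·m+(1−m)·y | M1=m, M0=m) − P(Y1=m·(1−y)+y·(1−m), Y0=y·m+(1−y)·(1−m) | M1=m, M0=m), where P(A | B) := μ(A ∩ B)/μ(B). -/
open MeasureTheory ProbabilityTheory

theorem statement9
    {Ω : Type*} [MeasurableSpace Ω] (μ : Measure Ω) [IsProbabilityMeasure μ]
    (Y1 Y0 M1 M0 X Y M : Ω → ℕ)
    (hY1meas : Measurable Y1) (hY0meas : Measurable Y0)
    (hM1meas : Measurable M1) (hM0meas : Measurable M0)
    (hXmeas : Measurable X)
    (hY1bin : ∀ ω, Y1 ω ≤ 1) (hY0bin : ∀ ω, Y0 ω ≤ 1)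
    (hM1bin : ∀ ω, M1 ω ≤ 1) (hM0bin : ∀ ω, M0 ω ≤ 1)
    (hXbin : ∀ ω, X ω ≤ 1)
    (hXpos : 0 < μ {ω | X ω = 1}) (hXlt : μ {ω | X ω = 1} < 1)
    (hindep : IndepFun X (fun ω => (Y1 ω, Y0 ω, M1 ω, M0 ω)) μ)
    (hYcons1 : ∀ ω, X ω = 1 → Y ω = Y1 ω)
    (hYcons0 : ∀ ω, X ω = 0 → Y ω = Y0 ω)
    (hMcons1 : ∀ ω, X ω = 1 → M ω = M1 ω)
    (hMcons0 : ∀ ω, X ω = 0 → M ω = M0 ω)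
    (hmono : ∀ ω, M0 ω ≤ M1 ω)
    (y m : ℕ) (hy : y ≤ 1) (hm : m ≤ 1)
    (hemp : condP μ {ω | Y ω = 1 - y ∧ M ω = m} {ω | X ω = 1 - m}
        > condP μ {ω | Y ω = 1 - y ∧ M ω = m} {ω | X ω = m}) :
    0 < μ ({ω | M1 ω = m} ∩ {ω | M0 ω = m}) ∧
    (condP μ {ω | Y ω = 1 - y ∧ M ω = m} {ω | X ω = 1 - m}
        - condP μ {ω | Y ω = 1 - y ∧ M ω = m} {ω | X ω = m})
      / condP μ {ω | M ω = m} {ω | X ω = 0}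
      ≤ (Pc μ Y1 Y0 M1 M0 (y * m + (1 - y) * (1 - m)) ((1 - y) * m + (1 - m) * y) m m
          - Pc μ Y1 Y0 M1 M0 (m * (1 - y) + (1 - m) * y) (y * m + (1 - y) * (1 - m)) m m)
        / (μ ({ω | M1 ω = m} ∩ {ω | M0 ω = m})).toReal ∧
    (Pc μ Y1 Y0 M1 M0 (y * m + (1 - y) * (1 - m)) ((1 - y) * m + (1 - m) * y) m m
        - Pc μ Y1 Y0 M1 M0 (m * (1 - y) + (1 - m) * y) (y * m + (1 - y) * (1 - m)) m m)
      / (μ ({ω | M1 ω = m} ∩ {ω | M0 ω = m})).toReal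
      = condP μ {ω | Y1 ω = y * m + (1 - y) * (1 - m) ∧ Y0 ω = (1 - y) * m + (1 - m) * y}
          {ω | M1 ω = m ∧ M0 ω = m}
        - condP μ {ω | Y1 ω = m * (1 - y) + y * (1 - m) ∧ Y0 ω = y * m + (1 - y) * (1 - m)}
          {ω | M1 ω = m ∧ M0 ω = m} := by
  have hfin : ∀ A : Set Ω, μ A ≠ ⊤ := fun A => measure_ne_top μ A
  have hX1ne : (μ {ω | X ω = 1}).toReal ≠ 0 :=
    ENNReal.toReal_ne_zero.mpr ⟨hXpos.ne', hfin _⟩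
  have hX0pos : 0 < μ {ω | X ω = 0} := by
    have hc : {ω | X ω = 0} = {ω | X ω = 1}ᶜ := by
      ext ω; have := hXbin ω
      simp only [Set.mem_setOf_eq, Set.mem_compl_iff]; omega
    have h2 : μ {ω | X ω = 1}ᶜ = μ Set.univ - μ {ω | X ω = 1} :=
      measure_compl (hXmeas (measurableSet_singleton 1)) (hfin _)
    rw [hc, h2, measure_univ]
    exact tsub_pos_of_lt hXlt
  have hX0ne : (μ {ω | X ω = 0}).toReal ≠ 0 :=
    ENNReal.toReal_ne_zero.mpr ⟨hX0pos.ne', hfin _⟩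
  have hind : ∀ (s : Set (ℕ × ℕ × ℕ × ℕ)), MeasurableSet s → ∀ x : ℕ,
      μ ({ω | (Y1 ω, Y0 ω, M1 ω, M0 ω) ∈ s} ∩ {ω | X ω = x})
        = μ {ω | (Y1 ω, Y0 ω, M1 ω, M0 ω) ∈ s} * μ {ω | X ω = x} := by
    intro s hs x
    have h := hindep.measure_inter_preimage_eq_mul {x} s (measurableSet_singleton x) hs
    rw [Set.inter_comm, mul_comm]
    exact h
  have splitR : ∀ (A : Set Ω) (Z : Ω → ℕ), Measurable Z → (∀ ω, Z ω ≤ 1) → ∀ v : ℕ, v ≤ 1 →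
      (μ A).toReal = (μ (A ∩ {ω | Z ω = v})).toReal + (μ (A ∩ {ω | Z ω = 1 - v})).toReal := by
    intro A Z hZ hZb v hv
    have h1 : A \ {ω | Z ω = 1} = A ∩ {ω | Z ω = 0} := by
      ext ω; have := hZb ω
      simp only [Set.mem_diff, Set.mem_inter_iff, Set.mem_setOf_eq]
      constructor <;> rintro ⟨h2, h3⟩ <;> exact ⟨h2, by omega⟩
    have base : μ A = μ (A ∩ {ω | Z ω = 1}) + μ (A ∩ {ω | Z ω = 0}) := by
      have base0 : μ (A ∩ {ω | Z ω = 1}) + μ (A \ {ω | Z ω = 1}) = μ A :=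
        measure_inter_add_diff A (hZ (measurableSet_singleton 1))
      rw [← base0, h1]
    interval_cases v
    · norm_num
      rw [base, ENNReal.toReal_add (hfin _) (hfin _), add_comm]
    · norm_num
      rw [base, ENNReal.toReal_add (hfin _) (hfin _)]
  have obs1 : ∀ a b : ℕ, condP μ {ω | Y ω = a ∧ M ω = b} {ω | X ω = 1}
      = (μ {ω | Y1 ω = a ∧ M1 ω = b}).toReal := by
    intro a b
    have hset : {ω | Y ω = a ∧ M ω = b} ∩ {ω | X ω = 1}
        = {ω | Y1 ω = a ∧ M1 ω = b} ∩ {ω | X ω = 1} := by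
      ext ω
      simp only [Set.mem_inter_iff, Set.mem_setOf_eq]
      constructor
      · rintro ⟨⟨h1, h2⟩, h3⟩
        exact ⟨⟨by rw [← hYcons1 ω h3]; exact h1, by rw [← hMcons1 ω h3]; exact h2⟩, h3⟩
      · rintro ⟨⟨h1, h2⟩, h3⟩
        exact ⟨⟨by rw [hYcons1 ω h3]; exact h1, by rw [hMcons1 ω h3]; exact h2⟩, h3⟩
    have hms : MeasurableSet {p : ℕ × ℕ × ℕ × ℕ | p.1 = a ∧ p.2.2.1 = b} :=
      (measurable_fst (measurableSet_singleton a)).inter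
        ((measurable_fst.comp (measurable_snd.comp measurable_snd))
          (measurableSet_singleton b))
    have hm' : μ ({ω | Y1 ω = a ∧ M1 ω = b} ∩ {ω | X ω = 1})
        = μ {ω | Y1 ω = a ∧ M1 ω = b} * μ {ω | X ω = 1} :=
      hind {p | p.1 = a ∧ p.2.2.1 = b} hms 1
    unfold condP
    rw [hset, hm', ENNReal.toReal_mul, mul_div_assoc, div_self hX1ne, mul_one]
  have obs0 : ∀ a b : ℕ, condP μ {ω | Y ω = a ∧ M ω = b} {ω | X ω = 0}
      = (μ {ω | Y0 ω = a ∧ M0 ω = b}).toReal := by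
    intro a b
    have hset : {ω | Y ω = a ∧ M ω = b} ∩ {ω | X ω = 0}
        = {ω | Y0 ω = a ∧ M0 ω = b} ∩ {ω | X ω = 0} := by
      ext ω
      simp only [Set.mem_inter_iff, Set.mem_setOf_eq]
      constructor
      · rintro ⟨⟨h1, h2⟩, h3⟩
        exact ⟨⟨by rw [← hYcons0 ω h3]; exact h1, by rw [← hMcons0 ω h3]; exact h2⟩, h3⟩
      · rintro ⟨⟨h1, h2⟩, h3⟩
        exact ⟨⟨by rw [hYcons0 ω h3]; exact h1, by rw [hMcons0 ω h3]; exact h2⟩, h3⟩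
    have hms : MeasurableSet {p : ℕ × ℕ × ℕ × ℕ | p.2.1 = a ∧ p.2.2.2 = b} :=
      ((measurable_fst.comp measurable_snd) (measurableSet_singleton a)).inter
        ((measurable_snd.comp (measurable_snd.comp measurable_snd))
          (measurableSet_singleton b))
    have hm' : μ ({ω | Y0 ω = a ∧ M0 ω = b} ∩ {ω | X ω = 0})
        = μ {ω | Y0 ω = a ∧ M0 ω = b} * μ {ω | X ω = 0} :=
      hind {p | p.2.1 = a ∧ p.2.2.2 = b} hms 0
    unfold condP
    rw [hset, hm', ENNReal.toReal_mul, mul_div_assoc, div_self hX0ne, mul_one]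
  have obsM0 : ∀ b : ℕ, condP μ {ω | M ω = b} {ω | X ω = 0}
      = (μ {ω | M0 ω = b}).toReal := by
    intro b
    have hset : {ω | M ω = b} ∩ {ω | X ω = 0}
        = {ω | M0 ω = b} ∩ {ω | X ω = 0} := by
      ext ω
      simp only [Set.mem_inter_iff, Set.mem_setOf_eq]
      constructor
      · rintro ⟨h1, h3⟩
        exact ⟨by rw [← hMcons0 ω h3]; exact h1, h3⟩
      · rintro ⟨h1, h3⟩
        exact ⟨by rw [hMcons0 ω h3]; exact h1, h3⟩
    have hms : MeasurableSet {p : ℕ × ℕ × ℕ × ℕ | p.2.2.2 = b} :=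
      (measurable_snd.comp (measurable_snd.comp measurable_snd))
        (measurableSet_singleton b)
    have hm' : μ ({ω | M0 ω = b} ∩ {ω | X ω = 0})
        = μ {ω | M0 ω = b} * μ {ω | X ω = 0} :=
      hind {p | p.2.2.2 = b} hms 0
    unfold condP
    rw [hset, hm', ENNReal.toReal_mul, mul_div_assoc, div_self hX0ne, mul_one]
  interval_cases m
  · -- m = 0
    norm_num at hemp ⊢
    rw [obs1 (1 - y) 0, obs0 (1 - y) 0] at hemp
    rw [obs1 (1 - y) 0, obs0 (1 - y) 0, obsM0 0]
    -- key decompositions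
    have E1 : {ω | Y1 ω = 1 - y ∧ M1 ω = 0}
        = {ω | Y1 ω = 1 - y ∧ M1 ω = 0 ∧ M0 ω = 0} := by
      ext ω; have h1 := hmono ω
      simp only [Set.mem_setOf_eq]; omega
    have e1 : {ω | Y1 ω = 1 - y ∧ M1 ω = 0 ∧ M0 ω = 0} ∩ {ω | Y0 ω = y}
        = {ω | Y1 ω = 1 - y ∧ Y0 ω = y ∧ M1 ω = 0 ∧ M0 ω = 0} := by
      ext ω; simp only [Set.mem_inter_iff, Set.mem_setOf_eq]; tauto
    have e2 : {ω | Y1 ω = 1 - y ∧ M1 ω = 0 ∧ M0 ω = 0} ∩ {ω | Y0 ω = 1 - y}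
        = {ω | Y1 ω = 1 - y ∧ Y0 ω = 1 - y ∧ M1 ω = 0 ∧ M0 ω = 0} := by
      ext ω; simp only [Set.mem_inter_iff, Set.mem_setOf_eq]; tauto
    have hs1 : (μ {ω | Y1 ω = 1 - y ∧ M1 ω = 0}).toReal
        = Pc μ Y1 Y0 M1 M0 (1 - y) y 0 0 + Pc μ Y1 Y0 M1 M0 (1 - y) (1 - y) 0 0 := by
      rw [E1, splitR _ Y0 hY0meas hY0bin y hy, e1, e2]; rfl
    have e3 : {ω | Y0 ω = 1 - y ∧ M1 ω = 0 ∧ M0 ω = 0} ∩ {ω | Y1 ω = y}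
        = {ω | Y1 ω = y ∧ Y0 ω = 1 - y ∧ M1 ω = 0 ∧ M0 ω = 0} := by
      ext ω; simp only [Set.mem_inter_iff, Set.mem_setOf_eq]; tauto
    have e4 : {ω | Y0 ω = 1 - y ∧ M1 ω = 0 ∧ M0 ω = 0} ∩ {ω | Y1 ω = 1 - y}
        = {ω | Y1 ω = 1 - y ∧ Y0 ω = 1 - y ∧ M1 ω = 0 ∧ M0 ω = 0} := by
      ext ω; simp only [Set.mem_inter_iff, Set.mem_setOf_eq]; tauto
    have hs0 : Pc μ Y1 Y0 M1 M0 y (1 - y) 0 0 + Pc μ Y1 Y0 M1 M0 (1 - y) (1 - y) 0 0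
        ≤ (μ {ω | Y0 ω = 1 - y ∧ M0 ω = 0}).toReal := by
      have h1 : (μ {ω | Y0 ω = 1 - y ∧ M1 ω = 0 ∧ M0 ω = 0}).toReal
          = Pc μ Y1 Y0 M1 M0 y (1 - y) 0 0 + Pc μ Y1 Y0 M1 M0 (1 - y) (1 - y) 0 0 := by
        rw [splitR _ Y1 hY1meas hY1bin y hy, e3, e4]; rfl
      rw [← h1]
      refine (ENNReal.toReal_le_toReal (hfin _) (hfin _)).mpr (measure_mono ?_)
      intro ω h; exact ⟨h.1, h.2.2⟩
    have hsub1 : {ω | Y1 ω = 1 - y ∧ Y0 ω = y ∧ M1 ω = 0 ∧ M0 ω = 0}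
        ⊆ {ω | M1 ω = 0} ∩ {ω | M0 ω = 0} := fun ω h => ⟨h.2.2.1, h.2.2.2⟩
    have hNle : Pc μ Y1 Y0 M1 M0 (1 - y) y 0 0
        ≤ (μ ({ω | M1 ω = 0} ∩ {ω | M0 ω = 0})).toReal :=
      (ENNReal.toReal_le_toReal (hfin _) (hfin _)).mpr (measure_mono hsub1)
    have hPc2nn : 0 ≤ Pc μ Y1 Y0 M1 M0 y (1 - y) 0 0 := ENNReal.toReal_nonneg
    have hNpos : 0 < Pc μ Y1 Y0 M1 M0 (1 - y) y 0 0 - Pc μ Y1 Y0 M1 M0 y (1 - y) 0 0 := by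
      linarith
    have hSpos : 0 < μ ({ω | M1 ω = 0} ∩ {ω | M0 ω = 0}) := by
      have hs : 0 < (μ ({ω | M1 ω = 0} ∩ {ω | M0 ω = 0})).toReal := by linarith
      exact (ENNReal.toReal_pos_iff.mp hs).1
    have hsR : 0 < (μ ({ω | M1 ω = 0} ∩ {ω | M0 ω = 0})).toReal := by linarith
    have hd0 : (μ ({ω | M1 ω = 0} ∩ {ω | M0 ω = 0})).toReal ≤ (μ {ω | M0 ω = 0}).toReal :=
      (ENNReal.toReal_le_toReal (hfin _) (hfin _)).mpr (measure_mono Set.inter_subset_right)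
    refine ⟨hSpos, ?_, ?_⟩
    · exact div_le_div₀ hNpos.le (by linarith) hsR hd0
    · have eA1 : {ω | Y1 ω = 1 - y ∧ Y0 ω = y} ∩ {ω | M1 ω = 0 ∧ M0 ω = 0}
          = {ω | Y1 ω = 1 - y ∧ Y0 ω = y ∧ M1 ω = 0 ∧ M0 ω = 0} := by
        ext ω; simp only [Set.mem_inter_iff, Set.mem_setOf_eq]; tauto
      have eA2 : {ω | Y1 ω = y ∧ Y0 ω = 1 - y} ∩ {ω | M1 ω = 0 ∧ M0 ω = 0}
          = {ω | Y1 ω = y ∧ Y0 ω = 1 - y ∧ M1 ω = 0 ∧ M0 ω = 0} := by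
        ext ω; simp only [Set.mem_inter_iff, Set.mem_setOf_eq]; tauto
      have eS : ({ω | M1 ω = 0} ∩ {ω | M0 ω = 0}) = {ω | M1 ω = 0 ∧ M0 ω = 0} := rfl
      unfold condP Pc
      rw [eA1, eA2, eS, sub_div]
  · -- m = 1
    norm_num at hemp ⊢
    rw [obs0 (1 - y) 1, obs1 (1 - y) 1] at hemp
    rw [obs0 (1 - y) 1, obs1 (1 - y) 1, obsM0 1]
    have E0 : {ω | Y0 ω = 1 - y ∧ M0 ω = 1}
        = {ω | Y0 ω = 1 - y ∧ M1 ω = 1 ∧ M0 ω = 1} := by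
      ext ω; have h1 := hmono ω; have h2 := hM1bin ω
      simp only [Set.mem_setOf_eq]; omega
    have e1 : {ω | Y0 ω = 1 - y ∧ M1 ω = 1 ∧ M0 ω = 1} ∩ {ω | Y1 ω = y}
        = {ω | Y1 ω = y ∧ Y0 ω = 1 - y ∧ M1 ω = 1 ∧ M0 ω = 1} := by
      ext ω; simp only [Set.mem_inter_iff, Set.mem_setOf_eq]; tauto
    have e2 : {ω | Y0 ω = 1 - y ∧ M1 ω = 1 ∧ M0 ω = 1} ∩ {ω | Y1 ω = 1 - y}
        = {ω | Y1 ω = 1 - y ∧ Y0 ω = 1 - y ∧ M1 ω = 1 ∧ M0 ω = 1} := by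
      ext ω; simp only [Set.mem_inter_iff, Set.mem_setOf_eq]; tauto
    have hs0 : (μ {ω | Y0 ω = 1 - y ∧ M0 ω = 1}).toReal
        = Pc μ Y1 Y0 M1 M0 y (1 - y) 1 1 + Pc μ Y1 Y0 M1 M0 (1 - y) (1 - y) 1 1 := by
      rw [E0, splitR _ Y1 hY1meas hY1bin y hy, e1, e2]; rfl
    have e3 : {ω | Y1 ω = 1 - y ∧ M1 ω = 1 ∧ M0 ω = 1} ∩ {ω | Y0 ω = y}
        = {ω | Y1 ω = 1 - y ∧ Y0 ω = y ∧ M1 ω = 1 ∧ M0 ω = 1} := by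
      ext ω; simp only [Set.mem_inter_iff, Set.mem_setOf_eq]; tauto
    have e4 : {ω | Y1 ω = 1 - y ∧ M1 ω = 1 ∧ M0 ω = 1} ∩ {ω | Y0 ω = 1 - y}
        = {ω | Y1 ω = 1 - y ∧ Y0 ω = 1 - y ∧ M1 ω = 1 ∧ M0 ω = 1} := by
      ext ω; simp only [Set.mem_inter_iff, Set.mem_setOf_eq]; tauto
    have hs1 : Pc μ Y1 Y0 M1 M0 (1 - y) y 1 1 + Pc μ Y1 Y0 M1 M0 (1 - y) (1 - y) 1 1
        ≤ (μ {ω | Y1 ω = 1 - y ∧ M1 ω = 1}).toReal := by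
      have h1 : (μ {ω | Y1 ω = 1 - y ∧ M1 ω = 1 ∧ M0 ω = 1}).toReal
          = Pc μ Y1 Y0 M1 M0 (1 - y) y 1 1 + Pc μ Y1 Y0 M1 M0 (1 - y) (1 - y) 1 1 := by
        rw [splitR _ Y0 hY0meas hY0bin y hy, e3, e4]; rfl
      rw [← h1]
      refine (ENNReal.toReal_le_toReal (hfin _) (hfin _)).mpr (measure_mono ?_)
      intro ω h; exact ⟨h.1, h.2.1⟩
    have hsub1 : {ω | Y1 ω = y ∧ Y0 ω = 1 - y ∧ M1 ω = 1 ∧ M0 ω = 1}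
        ⊆ {ω | M1 ω = 1} ∩ {ω | M0 ω = 1} := fun ω h => ⟨h.2.2.1, h.2.2.2⟩
    have hNle : Pc μ Y1 Y0 M1 M0 y (1 - y) 1 1
        ≤ (μ ({ω | M1 ω = 1} ∩ {ω | M0 ω = 1})).toReal :=
      (ENNReal.toReal_le_toReal (hfin _) (hfin _)).mpr (measure_mono hsub1)
    have hPc2nn : 0 ≤ Pc μ Y1 Y0 M1 M0 (1 - y) y 1 1 := ENNReal.toReal_nonneg
    have hNpos : 0 < Pc μ Y1 Y0 M1 M0 y (1 - y) 1 1 - Pc μ Y1 Y0 M1 M0 (1 - y) y 1 1 := by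
      linarith
    have hSpos : 0 < μ ({ω | M1 ω = 1} ∩ {ω | M0 ω = 1}) := by
      have hs : 0 < (μ ({ω | M1 ω = 1} ∩ {ω | M0 ω = 1})).toReal := by linarith
      exact (ENNReal.toReal_pos_iff.mp hs).1
    have hsR : 0 < (μ ({ω | M1 ω = 1} ∩ {ω | M0 ω = 1})).toReal := by linarith
    have hd0 : (μ ({ω | M1 ω = 1} ∩ {ω | M0 ω = 1})).toReal ≤ (μ {ω | M0 ω = 1}).toReal :=
      (ENNReal.toReal_le_toReal (hfin _) (hfin _)).mpr (measure_mono Set.inter_subset_right)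
    refine ⟨hSpos, ?_, ?_⟩
    · exact div_le_div₀ hNpos.le (by linarith) hsR hd0
    · have eA1 : {ω | Y1 ω = y ∧ Y0 ω = 1 - y} ∩ {ω | M1 ω = 1 ∧ M0 ω = 1}
          = {ω | Y1 ω = y ∧ Y0 ω = 1 - y ∧ M1 ω = 1 ∧ M0 ω = 1} := by
        ext ω; simp only [Set.mem_inter_iff, Set.mem_setOf_eq]; tauto
      have eA2 : {ω | Y1 ω = 1 - y ∧ Y0 ω = y} ∩ {ω | M1 ω = 1 ∧ M0 ω = 1}
          = {ω | Y1 ω = 1 - y ∧ Y0 ω = y ∧ M1 ω = 1 ∧ M0 ω = 1} := by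
        ext ω; simp only [Set.mem_inter_iff, Set.mem_setOf_eq]; tauto
      have eS : ({ω | M1 ω = 1} ∩ {ω | M0 ω = 1}) = {ω | M1 ω = 1 ∧ M0 ω = 1} := rfl
      unfold condP Pc
      rw [eA1, eA2, eS, sub_div]
end

section
/- For every y ∈ {0,1} and m ∈ {0,1}, define r := P_c(y·m+(1−m)·(1−y), (1−y)·m+(1−m)·y, 0, 1) + P_c(1−y, 1−y, 0, 1) − P_c(y·(1−m)+(1−y)·m, (1−y)·(1−m)+y·m, 1, 0) − P_c(1−y, 1−y, 1, 0), and q := μ({M1=m} ∩ {M0=1−m}). If μ({M1=m} ∩ {M0=m}) > 0, then [P(Y=1−y, M=m | X=1−m) − P(Y=1−y, M=m | X=m) − r] / [P(M=m | X=1) − q] = [P_c(y·m+(1−y)·(1−m), (1−y)·m+(1−m)·y, m, m) − P_c(m·(1−y)+(1−m)·y, y·m+(1−y)·(1−m), m, m)] / μ({M1=m} ∩ {M0=m}), and this common value equals P(Y1=y·m+(1−y)·(1−m), Y0=(1−y)·m+(1−m)·y | M1=m, M0=m) − P(Y1=m·(1−y)+y·(1−m), Y0=y·m+(1−y)·(1−m)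 | M1=m, M0=m), where P(A | B) := μ(A ∩ B)/μ(B). -/
open MeasureTheory ProbabilityTheory

section Helpers

variable {Ω : Type*} [MeasurableSpace Ω] (μ : Measure Ω) [IsProbabilityMeasure μ]
  (Y1 Y0 M1 M0 X Y M : Ω → ℕ)

/-- Split a measure along a binary variable. -/
lemma split_bin (S : Set Ω) (Z : Ω → ℕ) (hZ : Measurable Z) (hbin : ∀ ω, Z ω ≤ 1) :
    (μ S).toReal = (μ (S ∩ {ω | Z ω = 0})).toReal + (μ (S ∩ {ω | Z ω = 1})).toReal := by
  have h0 : MeasurableSet {ω | Z ω = 0} := hZ (measurableSet_singleton 0)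
  have hsplit : μ (S ∩ {ω | Z ω = 0}) + μ (S \ {ω | Z ω = 0}) = μ S :=
    measure_inter_add_diff S h0
  have hdiff : S \ {ω | Z ω = 0} = S ∩ {ω | Z ω = 1} := by
    ext ω; simp only [Set.mem_diff, Set.mem_inter_iff, Set.mem_setOf_eq]
    have := hbin ω; constructor <;> intro h <;> exact ⟨h.1, by omega⟩
  rw [hdiff] at hsplit
  rw [← hsplit, ENNReal.toReal_add (measure_ne_top μ _) (measure_ne_top μ _)]

lemma indep1 (hindep : IndepFun X (fun ω => (Y1 ω, Y0 ω, M1 ω, M0 ω)) μ)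
    (x b c : ℕ) :
    μ ({ω | Y1 ω = b ∧ M1 ω = c} ∩ {ω | X ω = x})
      = μ {ω | X ω = x} * μ {ω | Y1 ω = b ∧ M1 ω = c} := by
  have hT : MeasurableSet {p : ℕ × ℕ × ℕ × ℕ | p.1 = b ∧ p.2.2.1 = c} := by
    have : {p : ℕ × ℕ × ℕ × ℕ | p.1 = b ∧ p.2.2.1 = c}
        = (Prod.fst ⁻¹' {b}) ∩ ((Prod.fst ∘ Prod.snd ∘ Prod.snd) ⁻¹' {c}) := by
      ext p; simp [Set.mem_preimage]
    rw [this]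
    exact (measurable_fst (measurableSet_singleton b)).inter
      ((measurable_fst.comp (measurable_snd.comp measurable_snd)) (measurableSet_singleton c))
  have := hindep.measure_inter_preimage_eq_mul {x} {p : ℕ × ℕ × ℕ × ℕ | p.1 = b ∧ p.2.2.1 = c}
    (measurableSet_singleton x) hT
  rw [Set.inter_comm]; exact this

lemma indep0 (hindep : IndepFun X (fun ω => (Y1 ω, Y0 ω, M1 ω, M0 ω)) μ)
    (x b c : ℕ) :
    μ ({ω | Y0 ω = b ∧ M0 ω = c} ∩ {ω | X ω = x})
      = μ {ω | X ω = x} * μ {ω | Y0 ω = b ∧ M0 ω = c} := by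
  have hT : MeasurableSet {p : ℕ × ℕ × ℕ × ℕ | p.2.1 = b ∧ p.2.2.2 = c} := by
    have : {p : ℕ × ℕ × ℕ × ℕ | p.2.1 = b ∧ p.2.2.2 = c}
        = ((Prod.fst ∘ Prod.snd) ⁻¹' {b}) ∩ ((Prod.snd ∘ Prod.snd ∘ Prod.snd) ⁻¹' {c}) := by
      ext p; simp [Set.mem_preimage]
    rw [this]
    exact ((measurable_fst.comp measurable_snd) (measurableSet_singleton b)).inter
      ((measurable_snd.comp (measurable_snd.comp measurable_snd)) (measurableSet_singleton c))
  have := hindep.measure_inter_preimage_eq_mul {x}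
    {p : ℕ × ℕ × ℕ × ℕ | p.2.1 = b ∧ p.2.2.2 = c} (measurableSet_singleton x) hT
  rw [Set.inter_comm]; exact this

lemma indepM (hindep : IndepFun X (fun ω => (Y1 ω, Y0 ω, M1 ω, M0 ω)) μ)
    (x c : ℕ) :
    μ ({ω | M1 ω = c} ∩ {ω | X ω = x}) = μ {ω | X ω = x} * μ {ω | M1 ω = c} := by
  have hT : MeasurableSet {p : ℕ × ℕ × ℕ × ℕ | p.2.2.1 = c} :=
    (measurable_fst.comp (measurable_snd.comp measurable_snd)) (measurableSet_singleton c)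
  have := hindep.measure_inter_preimage_eq_mul {x}
    {p : ℕ × ℕ × ℕ × ℕ | p.2.2.1 = c} (measurableSet_singleton x) hT
  rw [Set.inter_comm]; exact this

/-- Observed conditional under X = 1, reduced to counterfactual terms. -/
lemma obs1 (hXpos : μ {ω | X ω = 1} ≠ 0)
    (hindep : IndepFun X (fun ω => (Y1 ω, Y0 ω, M1 ω, M0 ω)) μ)
    (hYcons1 : ∀ ω, X ω = 1 → Y ω = Y1 ω)
    (hMcons1 : ∀ ω, X ω = 1 → M ω = M1 ω)
    (b c : ℕ) :
    condP μ {ω | Y ω = b ∧ M ω = c} {ω | X ω = 1}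
      = (μ {ω | Y1 ω = b ∧ M1 ω = c}).toReal := by
  have hcons : {ω | Y ω = b ∧ M ω = c} ∩ {ω | X ω = 1}
      = {ω | Y1 ω = b ∧ M1 ω = c} ∩ {ω | X ω = 1} := by
    ext ω
    simp only [Set.mem_inter_iff, Set.mem_setOf_eq]
    constructor
    · rintro ⟨⟨h1, h2⟩, h3⟩
      exact ⟨⟨by rw [← hYcons1 ω h3]; exact h1, by rw [← hMcons1 ω h3]; exact h2⟩, h3⟩
    · rintro ⟨⟨h1, h2⟩, h3⟩
      exact ⟨⟨by rw [hYcons1 ω h3]; exact h1, by rw [hMcons1 ω h3]; exact h2⟩, h3⟩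
  have hXne : (μ {ω | X ω = 1}).toReal ≠ 0 :=
    ENNReal.toReal_ne_zero.2 ⟨hXpos, measure_ne_top μ _⟩
  rw [condP, hcons, indep1 μ Y1 Y0 M1 M0 X hindep 1 b c, ENNReal.toReal_mul,
    mul_comm, mul_div_assoc, div_self hXne, mul_one]

lemma obs0 (hXpos : μ {ω | X ω = 0} ≠ 0)
    (hindep : IndepFun X (fun ω => (Y1 ω, Y0 ω, M1 ω, M0 ω)) μ)
    (hYcons0 : ∀ ω, X ω = 0 → Y ω = Y0 ω)
    (hMcons0 : ∀ ω, X ω = 0 → M ω = M0 ω)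
    (b c : ℕ) :
    condP μ {ω | Y ω = b ∧ M ω = c} {ω | X ω = 0}
      = (μ {ω | Y0 ω = b ∧ M0 ω = c}).toReal := by
  have hcons : {ω | Y ω = b ∧ M ω = c} ∩ {ω | X ω = 0}
      = {ω | Y0 ω = b ∧ M0 ω = c} ∩ {ω | X ω = 0} := by
    ext ω
    simp only [Set.mem_inter_iff, Set.mem_setOf_eq]
    constructor
    · rintro ⟨⟨h1, h2⟩, h3⟩
      exact ⟨⟨by rw [← hYcons0 ω h3]; exact h1, by rw [← hMcons0 ω h3]; exact h2⟩, h3⟩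
    · rintro ⟨⟨h1, h2⟩, h3⟩
      exact ⟨⟨by rw [hYcons0 ω h3]; exact h1, by rw [hMcons0 ω h3]; exact h2⟩, h3⟩
  have hXne : (μ {ω | X ω = 0}).toReal ≠ 0 :=
    ENNReal.toReal_ne_zero.2 ⟨hXpos, measure_ne_top μ _⟩
  rw [condP, hcons, indep0 μ Y1 Y0 M1 M0 X hindep 0 b c, ENNReal.toReal_mul,
    mul_comm, mul_div_assoc, div_self hXne, mul_one]

lemma obsM (hXpos : μ {ω | X ω = 1} ≠ 0)
    (hindep : IndepFun X (fun ω => (Y1 ω, Y0 ω, M1 ω, M0 ω)) μ)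
    (hMcons1 : ∀ ω, X ω = 1 → M ω = M1 ω)
    (c : ℕ) :
    condP μ {ω | M ω = c} {ω | X ω = 1} = (μ {ω | M1 ω = c}).toReal := by
  have hcons : {ω | M ω = c} ∩ {ω | X ω = 1} = {ω | M1 ω = c} ∩ {ω | X ω = 1} := by
    ext ω
    simp only [Set.mem_inter_iff, Set.mem_setOf_eq]
    constructor
    · rintro ⟨h1, h3⟩; exact ⟨by rw [← hMcons1 ω h3]; exact h1, h3⟩
    · rintro ⟨h1, h3⟩; exact ⟨by rw [hMcons1 ω h3]; exact h1, h3⟩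
  have hXne : (μ {ω | X ω = 1}).toReal ≠ 0 :=
    ENNReal.toReal_ne_zero.2 ⟨hXpos, measure_ne_top μ _⟩
  rw [condP, hcons, indepM μ Y1 Y0 M1 M0 X hindep 1 c, ENNReal.toReal_mul,
    mul_comm, mul_div_assoc, div_self hXne, mul_one]

lemma decomp1 (hM0meas : Measurable M0) (hM0bin : ∀ ω, M0 ω ≤ 1)
    (hY0meas : Measurable Y0) (hY0bin : ∀ ω, Y0 ω ≤ 1) (b c : ℕ) :
    (μ {ω | Y1 ω = b ∧ M1 ω = c}).toReal
      = Pc μ Y1 Y0 M1 M0 b 0 c 0 + Pc μ Y1 Y0 M1 M0 b 1 c 0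
        + Pc μ Y1 Y0 M1 M0 b 0 c 1 + Pc μ Y1 Y0 M1 M0 b 1 c 1 := by
  have e : ∀ i j : ℕ, ({ω | Y1 ω = b ∧ M1 ω = c} ∩ {ω | M0 ω = j}) ∩ {ω | Y0 ω = i}
      = {ω | Y1 ω = b ∧ Y0 ω = i ∧ M1 ω = c ∧ M0 ω = j} := by
    intro i j; ext ω
    simp only [Set.mem_inter_iff, Set.mem_setOf_eq]; tauto
  rw [split_bin μ _ M0 hM0meas hM0bin,
    split_bin μ ({ω | Y1 ω = b ∧ M1 ω = c} ∩ {ω | M0 ω = 0}) Y0 hY0meas hY0bin,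
    split_bin μ ({ω | Y1 ω = b ∧ M1 ω = c} ∩ {ω | M0 ω = 1}) Y0 hY0meas hY0bin,
    e 0 0, e 1 0, e 0 1, e 1 1]
  simp only [Pc]; ring

lemma decomp0 (hM1meas : Measurable M1) (hM1bin : ∀ ω, M1 ω ≤ 1)
    (hY1meas : Measurable Y1) (hY1bin : ∀ ω, Y1 ω ≤ 1) (b c : ℕ) :
    (μ {ω | Y0 ω = b ∧ M0 ω = c}).toReal
      = Pc μ Y1 Y0 M1 M0 0 b 0 c + Pc μ Y1 Y0 M1 M0 1 b 0 c
        + Pc μ Y1 Y0 M1 M0 0 b 1 c + Pc μ Y1 Y0 M1 M0 1 b 1 c := by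
  have e : ∀ i j : ℕ, ({ω | Y0 ω = b ∧ M0 ω = c} ∩ {ω | M1 ω = j}) ∩ {ω | Y1 ω = i}
      = {ω | Y1 ω = i ∧ Y0 ω = b ∧ M1 ω = j ∧ M0 ω = c} := by
    intro i j; ext ω
    simp only [Set.mem_inter_iff, Set.mem_setOf_eq]; tauto
  rw [split_bin μ _ M1 hM1meas hM1bin,
    split_bin μ ({ω | Y0 ω = b ∧ M0 ω = c} ∩ {ω | M1 ω = 0}) Y1 hY1meas hY1bin,
    split_bin μ ({ω | Y0 ω = b ∧ M0 ω = c} ∩ {ω | M1 ω = 1}) Y1 hY1meas hY1bin,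
    e 0 0, e 1 0, e 0 1, e 1 1]
  simp only [Pc]; ring

lemma decompM (hM0meas : Measurable M0) (hM0bin : ∀ ω, M0 ω ≤ 1) (c : ℕ) :
    (μ {ω | M1 ω = c}).toReal
      = (μ ({ω | M1 ω = c} ∩ {ω | M0 ω = 0})).toReal
        + (μ ({ω | M1 ω = c} ∩ {ω | M0 ω = 1})).toReal :=
  split_bin μ _ M0 hM0meas hM0bin

lemma condB (a b mm : ℕ) :
    condP μ {ω | Y1 ω = a ∧ Y0 ω = b} {ω | M1 ω = mm ∧ M0 ω = mm}
      = Pc μ Y1 Y0 M1 M0 a b mm mm / (μ ({ω | M1 ω = mm} ∩ {ω | M0 ω = mm})).toReal := by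
  have h1 : {ω | Y1 ω = a ∧ Y0 ω = b} ∩ {ω | M1 ω = mm ∧ M0 ω = mm}
      = {ω | Y1 ω = a ∧ Y0 ω = b ∧ M1 ω = mm ∧ M0 ω = mm} := by
    ext ω; simp only [Set.mem_inter_iff, Set.mem_setOf_eq]; tauto
  have h2 : {ω | M1 ω = mm ∧ M0 ω = mm} = {ω | M1 ω = mm} ∩ {ω | M0 ω = mm} := rfl
  rw [condP, h1, h2, Pc]

end Helpers

theorem statement11
    {Ω : Type*} [MeasurableSpace Ω] (μ : Measure Ω) [IsProbabilityMeasure μ]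
    (Y1 Y0 M1 M0 X Y M : Ω → ℕ)
    (hY1meas : Measurable Y1) (hY0meas : Measurable Y0)
    (hM1meas : Measurable M1) (hM0meas : Measurable M0)
    (hXmeas : Measurable X)
    (hY1bin : ∀ ω, Y1 ω ≤ 1) (hY0bin : ∀ ω, Y0 ω ≤ 1)
    (hM1bin : ∀ ω, M1 ω ≤ 1) (hM0bin : ∀ ω, M0 ω ≤ 1)
    (hXbin : ∀ ω, X ω ≤ 1)
    (hXpos : 0 < μ {ω | X ω = 1}) (hXlt : μ {ω | X ω = 1} < 1)
    (hindep : IndepFun X (fun ω => (Y1 ω, Y0 ω, M1 ω, M0 ω)) μ)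
    (hYcons1 : ∀ ω, X ω = 1 → Y ω = Y1 ω)
    (hYcons0 : ∀ ω, X ω = 0 → Y ω = Y0 ω)
    (hMcons1 : ∀ ω, X ω = 1 → M ω = M1 ω)
    (hMcons0 : ∀ ω, X ω = 0 → M ω = M0 ω)
    (y m : ℕ) (hy : y ≤ 1) (hm : m ≤ 1)
    (r : ℝ)
    (hr : r = Pc μ Y1 Y0 M1 M0 (y * m + (1 - m) * (1 - y)) ((1 - y) * m + (1 - m) * y) 0 1
        + Pc μ Y1 Y0 M1 M0 (1 - y) (1 - y) 0 1
        - Pc μ Y1 Y0 M1 M0 (y * (1 - m) + (1 - y) * m) ((1 - y) * (1 - m) + y * m) 1 0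
        - Pc μ Y1 Y0 M1 M0 (1 - y) (1 - y) 1 0)
    (q : ℝ) (hq : q = (μ ({ω | M1 ω = m} ∩ {ω | M0 ω = 1 - m})).toReal)
    (hpos : 0 < μ ({ω | M1 ω = m} ∩ {ω | M0 ω = m})) :
    (condP μ {ω | Y ω = 1 - y ∧ M ω = m} {ω | X ω = 1 - m}
        - condP μ {ω | Y ω = 1 - y ∧ M ω = m} {ω | X ω = m} - r)
      / (condP μ {ω | M ω = m} {ω | X ω = 1} - q)
      = (Pc μ Y1 Y0 M1 M0 (y * m + (1 - y) * (1 - m)) ((1 - y) * m + (1 - m) * y) m m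
          - Pc μ Y1 Y0 M1 M0 (m * (1 - y) + (1 - m) * y) (y * m + (1 - y) * (1 - m)) m m)
        / (μ ({ω | M1 ω = m} ∩ {ω | M0 ω = m})).toReal ∧
    (Pc μ Y1 Y0 M1 M0 (y * m + (1 - y) * (1 - m)) ((1 - y) * m + (1 - m) * y) m m
        - Pc μ Y1 Y0 M1 M0 (m * (1 - y) + (1 - m) * y) (y * m + (1 - y) * (1 - m)) m m)
      / (μ ({ω | M1 ω = m} ∩ {ω | M0 ω = m})).toReal
      = condP μ {ω | Y1 ω = y * m + (1 - y) * (1 - m) ∧ Y0 ω = (1 - y) * m + (1 - m) * y}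
          {ω | M1 ω = m ∧ M0 ω = m}
        - condP μ {ω | Y1 ω = m * (1 - y) + y * (1 - m) ∧ Y0 ω = y * m + (1 - y) * (1 - m)}
          {ω | M1 ω = m ∧ M0 ω = m} := by
  subst hr hq
  -- basic nonvanishing facts
  have hX1ne : μ {ω | X ω = 1} ≠ 0 := hXpos.ne'
  have hcompl : {ω | X ω = 0} = {ω | X ω = 1}ᶜ := by
    ext ω; simp only [Set.mem_setOf_eq, Set.mem_compl_iff]
    have := hXbin ω; omega
  have hms : MeasurableSet {ω | X ω = 1} := hXmeas (measurableSet_singleton 1)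
  have hX0ne : μ {ω | X ω = 0} ≠ 0 := by
    rw [hcompl, measure_compl hms (measure_ne_top μ _), measure_univ]
    intro h
    rw [tsub_eq_zero_iff_le] at h
    exact absurd h (not_le.2 hXlt)
  have hDne : (μ ({ω | M1 ω = m} ∩ {ω | M0 ω = m})).toReal ≠ 0 :=
    (ENNReal.toReal_pos hpos.ne' (measure_ne_top μ _)).ne'
  constructor
  · -- first identity
    have hden : condP μ {ω | M ω = m} {ω | X ω = 1}
        - (μ ({ω | M1 ω = m} ∩ {ω | M0 ω = 1 - m})).toReal
        = (μ ({ω | M1 ω = m} ∩ {ω | M0 ω = m})).toReal := by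
      rw [obsM μ Y1 Y0 M1 M0 X M hX1ne hindep hMcons1,
        decompM μ M1 M0 hM0meas hM0bin]
      interval_cases m <;> norm_num
    rw [hden]
    congr 1
    interval_cases y <;> interval_cases m <;>
    · norm_num
      rw [obs1 μ Y1 Y0 M1 M0 X Y M hX1ne hindep hYcons1 hMcons1,
        obs0 μ Y1 Y0 M1 M0 X Y M hX0ne hindep hYcons0 hMcons0,
        decomp1 μ Y1 Y0 M1 M0 hM0meas hM0bin hY0meas hY0bin,
        decomp0 μ Y1 Y0 M1 M0 hM1meas hM1bin hY1meas hY1bin]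
      ring
  · -- second identity
    rw [show m * (1 - y) + (1 - m) * y = m * (1 - y) + y * (1 - m) from by ring]
    rw [condB μ Y1 Y0 M1 M0, condB μ Y1 Y0 M1 M0, sub_div]
end

section
/- If P(Y=1, Z=1 | X=1) + P(Y=0, Z=0 | X=0) > 1, then the event {ω ∈ Ω : Y1(ω)=1, Y0(ω)=0, Z1(ω)=1, Z0(ω)=0} has positive μ-measure (in particular it is nonempty), i.e. the treatment has an individual level pleiotropic effect that is causative for both Y and Z. -/
/-!
By consistency and randomization, `P(Y=1, Z=1 | X=1) = μ{Y1=1, Z1=1}` and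
`P(Y=0, Z=0 | X=0) = μ{Y0=0, Z0=0}`. Two events whose probabilities add up to more than one
must intersect in positive measure, and their intersection is the pleiotropic event.
-/

open MeasureTheory ProbabilityTheory

open Set

section

variable {Ω : Type*} [MeasurableSpace Ω] {μ : Measure Ω}

lemma condP_congr_left {A A' B : Set Ω} (h : A ∩ B = A' ∩ B) : condP μ A B = condP μ A' B := by
  rw [condP, condP, h]

lemma condP_eq_measureReal_of_measure_inter_eq_mul [IsFiniteMeasure μ] {A B : Set Ω}
    (hB : μ B ≠ 0) (h : μ (A ∩ B) = μ A * μ B) : condP μ A B = μ.real A := by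
  have hB' : (μ B).toReal ≠ 0 := ENNReal.toReal_ne_zero.2 ⟨hB, measure_ne_top μ B⟩
  rw [condP, h, ENNReal.toReal_mul, mul_div_assoc, div_self hB', mul_one, measureReal_def]

lemma condP_preimage_eq_measureReal_of_indepFun [IsFiniteMeasure μ] {β γ : Type*}
    [MeasurableSpace β] [MeasurableSpace γ] {X : Ω → β} {T : Ω → γ} (hXT : IndepFun X T μ)
    {s : Set β} {t : Set γ} (hs : MeasurableSet s) (ht : MeasurableSet t)
    (hX : μ (X ⁻¹' s) ≠ 0) : condP μ (T ⁻¹' t) (X ⁻¹' s) = μ.real (T ⁻¹' t) :=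
  condP_eq_measureReal_of_measure_inter_eq_mul hX
    (hXT.symm.measure_inter_preimage_eq_mul t s ht hs)

lemma measure_pos_of_union_eq_univ [IsProbabilityMeasure μ] {s t : Set Ω} (hst : s ∪ t = univ)
    (hs : μ s < 1) : 0 < μ t := by
  have hcover : 1 ≤ μ s + μ t := calc
    1 = μ (s ∪ t) := by rw [hst, measure_univ]
    _ ≤ μ s + μ t := measure_union_le s t
  by_contra! ht
  rw [nonpos_iff_eq_zero.1 ht, add_zero] at hcover
  exact hcover.not_gt hs

lemma measure_inter_pos_of_one_lt_measureReal_add [IsProbabilityMeasure μ] {A B : Set Ω}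
    (hB : MeasurableSet B) (h : 1 < μ.real A + μ.real B) : 0 < μ (A ∩ B) := by
  have hsum := measureReal_union_add_inter (s := A) hB (μ := μ)
  have hunion : μ.real (A ∪ B) ≤ 1 := measureReal_le_one
  have hreal : 0 < μ.real (A ∩ B) := by linarith
  exact (ENNReal.toReal_pos_iff.1 hreal).1

end

theorem statement12_general
    {Ω : Type*} [MeasurableSpace Ω] (μ : Measure Ω) [IsProbabilityMeasure μ]
    (Y1 Y0 Z1 Z0 X Y Z : Ω → ℕ)
    (hY0meas : Measurable Y0)
    (hZ0meas : Measurable Z0)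
    (hXbin : ∀ ω, X ω ≤ 1)
    (hXpos : 0 < μ {ω | X ω = 1}) (hXlt : μ {ω | X ω = 1} < 1)
    (hindep : IndepFun X (fun ω => (Y1 ω, Y0 ω, Z1 ω, Z0 ω)) μ)
    (hYcons1 : ∀ ω, X ω = 1 → Y ω = Y1 ω)
    (hYcons0 : ∀ ω, X ω = 0 → Y ω = Y0 ω)
    (hZcons1 : ∀ ω, X ω = 1 → Z ω = Z1 ω)
    (hZcons0 : ∀ ω, X ω = 0 → Z ω = Z0 ω)
    (hemp : condP μ {ω | Y ω = 1 ∧ Z ω = 1} {ω | X ω = 1}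
        + condP μ {ω | Y ω = 0 ∧ Z ω = 0} {ω | X ω = 0} > 1) :
    0 < μ {ω | Y1 ω = 1 ∧ Y0 ω = 0 ∧ Z1 ω = 1 ∧ Z0 ω = 0} ∧
      {ω | Y1 ω = 1 ∧ Y0 ω = 0 ∧ Z1 ω = 1 ∧ Z0 ω = 0}.Nonempty := by
  set A := {ω | Y1 ω = 1 ∧ Z1 ω = 1}
  set B := {ω | Y0 ω = 0 ∧ Z0 ω = 0}
  have hX0 : 0 < μ {ω | X ω = 0} :=
    measure_pos_of_union_eq_univ (by
      ext ω; have := hXbin ω; simp only [mem_union, mem_ofPred_eq, mem_univ, iff_true]; omega) hXlt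
  have hA : condP μ {ω | Y ω = 1 ∧ Z ω = 1} {ω | X ω = 1} = μ.real A := by
    rw [condP_congr_left (A' := A) (by
      ext ω
      exact and_congr_left fun hx => by simp only [A, mem_ofPred_eq, hYcons1 ω hx, hZcons1 ω hx])]
    exact condP_preimage_eq_measureReal_of_indepFun hindep (t := {p | p.1 = 1 ∧ p.2.2.1 = 1})
      (measurableSet_singleton 1) .of_discrete hXpos.ne'
  have hB : condP μ {ω | Y ω = 0 ∧ Z ω = 0} {ω | X ω = 0} = μ.real B := by
    rw [condP_congr_left (A' := B) (by
      ext ω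
      exact and_congr_left fun hx => by simp only [B, mem_ofPred_eq, hYcons0 ω hx, hZcons0 ω hx])]
    exact condP_preimage_eq_measureReal_of_indepFun hindep (t := {p | p.2.1 = 0 ∧ p.2.2.2 = 0})
      (measurableSet_singleton 0) .of_discrete hX0.ne'
  have hBmeas : MeasurableSet B :=
    (hY0meas (measurableSet_singleton 0)).inter (hZ0meas (measurableSet_singleton 0))
  have hAB : A ∩ B = {ω | Y1 ω = 1 ∧ Y0 ω = 0 ∧ Z1 ω = 1 ∧ Z0 ω = 0} := by
    ext ω; simp only [A, B, mem_inter_iff, mem_ofPred_eq]; tauto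
  have hpos := measure_inter_pos_of_one_lt_measureReal_add hBmeas (hA ▸ hB ▸ hemp)
  rw [hAB] at hpos
  exact ⟨hpos, nonempty_of_measure_ne_zero hpos.ne'⟩

theorem statement12
    {Ω : Type*} [MeasurableSpace Ω] (μ : Measure Ω) [IsProbabilityMeasure μ]
    (Y1 Y0 Z1 Z0 X Y Z : Ω → ℕ)
    (hY1meas : Measurable Y1) (hY0meas : Measurable Y0)
    (hZ1meas : Measurable Z1) (hZ0meas : Measurable Z0)
    (hXmeas : Measurable X)
    (hY1bin : ∀ ω, Y1 ω ≤ 1) (hY0bin : ∀ ω, Y0 ω ≤ 1)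
    (hZ1bin : ∀ ω, Z1 ω ≤ 1) (hZ0bin : ∀ ω, Z0 ω ≤ 1)
    (hXbin : ∀ ω, X ω ≤ 1)
    (hXpos : 0 < μ {ω | X ω = 1}) (hXlt : μ {ω | X ω = 1} < 1)
    (hindep : IndepFun X (fun ω => (Y1 ω, Y0 ω, Z1 ω, Z0 ω)) μ)
    (hYcons1 : ∀ ω, X ω = 1 → Y ω = Y1 ω)
    (hYcons0 : ∀ ω, X ω = 0 → Y ω = Y0 ω)
    (hZcons1 : ∀ ω, X ω = 1 → Z ω = Z1 ω)
    (hZcons0 : ∀ ω, X ω = 0 → Z ω = Z0 ω)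
    (hemp : condP μ {ω | Y ω = 1 ∧ Z ω = 1} {ω | X ω = 1}
        + condP μ {ω | Y ω = 0 ∧ Z ω = 0} {ω | X ω = 0} > 1) :
    0 < μ {ω | Y1 ω = 1 ∧ Y0 ω = 0 ∧ Z1 ω = 1 ∧ Z0 ω = 0} ∧
      {ω | Y1 ω = 1 ∧ Y0 ω = 0 ∧ Z1 ω = 1 ∧ Z0 ω = 0}.Nonempty :=
  statement12_general μ Y1 Y0 Z1 Z0 X Y Z hY0meas hZ0meas hXbin hXpos hXlt hindep hYcons1 hYcons0
    hZcons1 hZcons0 hemp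
end

section
/- The quantity P(Y=1, Z=1 | X=1) + P(Y=0, Z=0 | X=0) − 1 equals μ({Y1=1, Y0=0, Z1=1, Z0=0}) − Σ_{(y1,z1) ∈ {0,1}² \ {(1,1)}} μ({Y1=y1, Z1=z1} ∩ {(Y0,Z0) ≠ (0,0)}); consequently P(Y=1, Z=1 | X=1) + P(Y=0, Z=0 | X=0) − 1 ≤ μ({Y1=1, Y0=0, Z1=1, Z0=0}). -/
open MeasureTheory ProbabilityTheory

theorem statement13
    {Ω : Type*} [MeasurableSpace Ω] (μ : Measure Ω) [IsProbabilityMeasure μ]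
    (Y1 Y0 Z1 Z0 X Y Z : Ω → ℕ)
    (hY1meas : Measurable Y1) (hY0meas : Measurable Y0)
    (hZ1meas : Measurable Z1) (hZ0meas : Measurable Z0)
    (hXmeas : Measurable X)
    (hY1bin : ∀ ω, Y1 ω ≤ 1) (hY0bin : ∀ ω, Y0 ω ≤ 1)
    (hZ1bin : ∀ ω, Z1 ω ≤ 1) (hZ0bin : ∀ ω, Z0 ω ≤ 1)
    (hXbin : ∀ ω, X ω ≤ 1)
    (hXpos : 0 < μ {ω | X ω = 1}) (hXlt : μ {ω | X ω = 1} < 1)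
    (hindep : IndepFun X (fun ω => (Y1 ω, Y0 ω, Z1 ω, Z0 ω)) μ)
    (hYcons1 : ∀ ω, X ω = 1 → Y ω = Y1 ω)
    (hYcons0 : ∀ ω, X ω = 0 → Y ω = Y0 ω)
    (hZcons1 : ∀ ω, X ω = 1 → Z ω = Z1 ω)
    (hZcons0 : ∀ ω, X ω = 0 → Z ω = Z0 ω)
    :
    condP μ {ω | Y ω = 1 ∧ Z ω = 1} {ω | X ω = 1}
      + condP μ {ω | Y ω = 0 ∧ Z ω = 0} {ω | X ω = 0} - 1
    = (μ {ω | Y1 ω = 1 ∧ Y0 ω = 0 ∧ Z1 ω = 1 ∧ Z0 ω = 0}).toReal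
      - ((μ {ω | Y1 ω = 0 ∧ Z1 ω = 0 ∧ ¬(Y0 ω = 0 ∧ Z0 ω = 0)}).toReal
        + (μ {ω | Y1 ω = 0 ∧ Z1 ω = 1 ∧ ¬(Y0 ω = 0 ∧ Z0 ω = 0)}).toReal
        + (μ {ω | Y1 ω = 1 ∧ Z1 ω = 0 ∧ ¬(Y0 ω = 0 ∧ Z0 ω = 0)}).toReal) ∧
    condP μ {ω | Y ω = 1 ∧ Z ω = 1} {ω | X ω = 1}
      + condP μ {ω | Y ω = 0 ∧ Z ω = 0} {ω | X ω = 0} - 1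
    ≤ (μ {ω | Y1 ω = 1 ∧ Y0 ω = 0 ∧ Z1 ω = 1 ∧ Z0 ω = 0}).toReal := by
  classical
  set A : Set Ω := {ω | Y1 ω = 1 ∧ Z1 ω = 1} with hAdef
  set B : Set Ω := {ω | Y0 ω = 0 ∧ Z0 ω = 0} with hBdef
  have hA : MeasurableSet A :=
    (hY1meas (measurableSet_singleton 1)).inter (hZ1meas (measurableSet_singleton 1))
  have hB : MeasurableSet B :=
    (hY0meas (measurableSet_singleton 0)).inter (hZ0meas (measurableSet_singleton 0))
  have hX1 : MeasurableSet {ω | X ω = 1} := hXmeas (measurableSet_singleton 1)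
  have hX1ne : μ {ω | X ω = 1} ≠ 0 := hXpos.ne'
  -- {X = 0} is the complement of {X = 1}
  have hX0eq : {ω | X ω = 0} = {ω | X ω = 1}ᶜ := by
    ext ω
    have := hXbin ω
    simp only [Set.mem_setOf_eq, Set.mem_compl_iff]
    omega
  have hX0meas : MeasurableSet {ω | X ω = 0} := by rw [hX0eq]; exact hX1.compl
  have hX0val : μ {ω | X ω = 0} = 1 - μ {ω | X ω = 1} := by
    rw [hX0eq, prob_compl_eq_one_sub hX1]
  have hX0ne : μ {ω | X ω = 0} ≠ 0 := by
    rw [hX0val]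
    exact (tsub_pos_of_lt hXlt).ne'
  -- independence of X-events and A, B
  have hkey : ∀ (s : Set ℕ) (T : Set (ℕ × ℕ × ℕ × ℕ)), MeasurableSet T →
      μ (X ⁻¹' s ∩ (fun ω => (Y1 ω, Y0 ω, Z1 ω, Z0 ω)) ⁻¹' T)
        = μ (X ⁻¹' s) * μ ((fun ω => (Y1 ω, Y0 ω, Z1 ω, Z0 ω)) ⁻¹' T) := by
    intro s T hT
    exact hindep.measure_inter_preimage_eq_mul s T trivial hT
  have hTA : MeasurableSet {p : ℕ × ℕ × ℕ × ℕ | p.1 = 1 ∧ p.2.2.1 = 1} := by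
    exact (measurable_fst (measurableSet_singleton 1)).inter
      ((measurable_fst.comp (measurable_snd.comp measurable_snd)) (measurableSet_singleton 1))
  have hTB : MeasurableSet {p : ℕ × ℕ × ℕ × ℕ | p.2.1 = 0 ∧ p.2.2.2 = 0} := by
    exact ((measurable_fst.comp measurable_snd) (measurableSet_singleton 0)).inter
      ((measurable_snd.comp (measurable_snd.comp measurable_snd)) (measurableSet_singleton 0))
  have hmulA : μ (A ∩ {ω | X ω = 1}) = μ {ω | X ω = 1} * μ A := by
    have h := hkey {1} {p : ℕ × ℕ × ℕ × ℕ | p.1 = 1 ∧ p.2.2.1 = 1} hTA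
    rw [Set.inter_comm]
    exact h
  have hmulB : μ (B ∩ {ω | X ω = 0}) = μ {ω | X ω = 0} * μ B := by
    have h := hkey {0} {p : ℕ × ℕ × ℕ × ℕ | p.2.1 = 0 ∧ p.2.2.2 = 0} hTB
    rw [Set.inter_comm]
    exact h
  -- consistency
  have hcons1 : {ω | Y ω = 1 ∧ Z ω = 1} ∩ {ω | X ω = 1} = A ∩ {ω | X ω = 1} := by
    ext ω
    simp only [Set.mem_inter_iff, Set.mem_setOf_eq, hAdef]
    constructor
    · rintro ⟨⟨hy, hz⟩, hx⟩
      exact ⟨⟨by rw [← hYcons1 ω hx]; exact hy, by rw [← hZcons1 ω hx]; exact hz⟩, hx⟩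
    · rintro ⟨⟨hy, hz⟩, hx⟩
      exact ⟨⟨by rw [hYcons1 ω hx]; exact hy, by rw [hZcons1 ω hx]; exact hz⟩, hx⟩
  have hcons0 : {ω | Y ω = 0 ∧ Z ω = 0} ∩ {ω | X ω = 0} = B ∩ {ω | X ω = 0} := by
    ext ω
    simp only [Set.mem_inter_iff, Set.mem_setOf_eq, hBdef]
    constructor
    · rintro ⟨⟨hy, hz⟩, hx⟩
      exact ⟨⟨by rw [← hYcons0 ω hx]; exact hy, by rw [← hZcons0 ω hx]; exact hz⟩, hx⟩
    · rintro ⟨⟨hy, hz⟩, hx⟩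
      exact ⟨⟨by rw [hYcons0 ω hx]; exact hy, by rw [hZcons0 ω hx]; exact hz⟩, hx⟩
  -- the conditional probabilities
  have hne1 : (μ {ω | X ω = 1}).toReal ≠ 0 :=
    ENNReal.toReal_ne_zero.mpr ⟨hX1ne, measure_ne_top μ _⟩
  have hne0 : (μ {ω | X ω = 0}).toReal ≠ 0 :=
    ENNReal.toReal_ne_zero.mpr ⟨hX0ne, measure_ne_top μ _⟩
  have hcondA : condP μ {ω | Y ω = 1 ∧ Z ω = 1} {ω | X ω = 1} = (μ A).toReal := by
    rw [condP, hcons1, hmulA, ENNReal.toReal_mul, mul_div_cancel_left₀ _ hne1]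
  have hcondB : condP μ {ω | Y ω = 0 ∧ Z ω = 0} {ω | X ω = 0} = (μ B).toReal := by
    rw [condP, hcons0, hmulB, ENNReal.toReal_mul, mul_div_cancel_left₀ _ hne0]
  -- inclusion-exclusion identity
  have e1 : (μ (A ∪ B)).toReal + (μ (A ∩ B)).toReal = (μ A).toReal + (μ B).toReal := by
    rw [← ENNReal.toReal_add (measure_ne_top μ _) (measure_ne_top μ _),
      ← ENNReal.toReal_add (measure_ne_top μ _) (measure_ne_top μ _),
      measure_union_add_inter A hB]
  have e2 : (μ (A ∪ B)).toReal = 1 - (μ (Aᶜ ∩ Bᶜ)).toReal := by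
    have : A ∪ B = (Aᶜ ∩ Bᶜ)ᶜ := by rw [Set.compl_inter, compl_compl, compl_compl]
    rw [this, prob_compl_eq_one_sub (hA.compl.inter hB.compl),
      ENNReal.toReal_sub_of_le prob_le_one ENNReal.one_ne_top, ENNReal.toReal_one]
  -- decomposition of Aᶜ ∩ Bᶜ
  set C00 : Set Ω := {ω | Y1 ω = 0 ∧ Z1 ω = 0 ∧ ¬(Y0 ω = 0 ∧ Z0 ω = 0)} with hC00def
  set C01 : Set Ω := {ω | Y1 ω = 0 ∧ Z1 ω = 1 ∧ ¬(Y0 ω = 0 ∧ Z0 ω = 0)} with hC01def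
  set C10 : Set Ω := {ω | Y1 ω = 1 ∧ Z1 ω = 0 ∧ ¬(Y0 ω = 0 ∧ Z0 ω = 0)} with hC10def
  have hC00 : MeasurableSet C00 :=
    (hY1meas (measurableSet_singleton 0)).inter
      ((hZ1meas (measurableSet_singleton 0)).inter hB.compl)
  have hC01 : MeasurableSet C01 :=
    (hY1meas (measurableSet_singleton 0)).inter
      ((hZ1meas (measurableSet_singleton 1)).inter hB.compl)
  have hC10 : MeasurableSet C10 :=
    (hY1meas (measurableSet_singleton 1)).inter
      ((hZ1meas (measurableSet_singleton 0)).inter hB.compl)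
  have hsplit : Aᶜ ∩ Bᶜ = (C00 ∪ C01) ∪ C10 := by
    ext ω
    have hy := hY1bin ω
    have hz := hZ1bin ω
    simp only [Set.mem_inter_iff, Set.mem_compl_iff, Set.mem_union, hAdef, hBdef,
      hC00def, hC01def, hC10def, Set.mem_setOf_eq]
    constructor
    · rintro ⟨hna, hnb⟩
      have h1 : Y1 ω = 0 ∨ Y1 ω = 1 := by omega
      have h2 : Z1 ω = 0 ∨ Z1 ω = 1 := by omega
      rcases h1 with h1 | h1 <;> rcases h2 with h2 | h2
      · exact Or.inl (Or.inl ⟨h1, h2, hnb⟩)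
      · exact Or.inl (Or.inr ⟨h1, h2, hnb⟩)
      · exact Or.inr ⟨h1, h2, hnb⟩
      · exact absurd ⟨h1, h2⟩ hna
    · rintro ((⟨h1, h2, h3⟩ | ⟨h1, h2, h3⟩) | ⟨h1, h2, h3⟩) <;>
        exact ⟨fun h => by omega, h3⟩
  have hdisj1 : Disjoint C00 C01 := by
    rw [Set.disjoint_left]
    rintro ω ⟨_, h2, _⟩ ⟨_, h2', _⟩
    omega
  have hdisj2 : Disjoint (C00 ∪ C01) C10 := by
    rw [Set.disjoint_left]
    rintro ω (⟨h1, _, _⟩ | ⟨h1, _, _⟩) ⟨h1', _, _⟩ <;> omega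
  have e3 : (μ (Aᶜ ∩ Bᶜ)).toReal = (μ C00).toReal + (μ C01).toReal + (μ C10).toReal := by
    rw [hsplit, measure_union hdisj2 hC10, measure_union hdisj1 hC01,
      ENNReal.toReal_add (by finiteness) (measure_ne_top μ _),
      ENNReal.toReal_add (measure_ne_top μ _) (measure_ne_top μ _)]
  have hABeq : A ∩ B = {ω | Y1 ω = 1 ∧ Y0 ω = 0 ∧ Z1 ω = 1 ∧ Z0 ω = 0} := by
    ext ω
    simp only [Set.mem_inter_iff, hAdef, hBdef, Set.mem_setOf_eq]
    tauto
  have main : condP μ {ω | Y ω = 1 ∧ Z ω = 1} {ω | X ω = 1}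
      + condP μ {ω | Y ω = 0 ∧ Z ω = 0} {ω | X ω = 0} - 1
      = (μ {ω | Y1 ω = 1 ∧ Y0 ω = 0 ∧ Z1 ω = 1 ∧ Z0 ω = 0}).toReal
      - ((μ C00).toReal + (μ C01).toReal + (μ C10).toReal) := by
    rw [hcondA, hcondB, ← hABeq, ← e3, ← e1, e2]
    ring
  refine ⟨main, ?_⟩
  rw [main]
  have h00 : (0:ℝ) ≤ (μ C00).toReal := ENNReal.toReal_nonneg
  have h01 : (0:ℝ) ≤ (μ C01).toReal := ENNReal.toReal_nonneg
  have h10 : (0:ℝ) ≤ (μ C10).toReal := ENNReal.toReal_nonneg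
  linarith
end

section
/- P(Y ∈ y_a, M ∈ m_a | X=1) + P(Y ∉ y_a, M ∈ m_a | X=0) − 1 ≤ μ(Y1 ∈ y_a, Y0 ∉ y_a, M1 ∈ m_a, M0 ∈ m_a) − μ(Y1 ∉ y_a, Y0 ∈ y_a, M1 ∈ m_a, M0 ∈ m_a), where μ(Y1 ∈ A, Y0 ∈ B, M1 ∈ C, M0 ∈ D) abbreviates the measure of the corresponding intersection of preimages. -/
/-!
By consistency, `{Y ∈ y_a, M ∈ m_a}` coincides on `{X = 1}` with `A = {Y1 ∈ y_a, M1 ∈ m_a}`, and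
`{Y ∉ y_a, M ∈ m_a}` coincides on `{X = 0}` with `B = {Y0 ∉ y_a, M0 ∈ m_a}`; by randomization,
conditioning on `X` does not change the probability of an event on potential outcomes. So the
left-hand side is `μ A + μ B - 1`. The subtracted event `C` is disjoint from `A ∪ B`, hence
`μ A + μ B = μ (A ∪ B) + μ (A ∩ B) ≤ 1 - μ C + μ (A ∩ B)`, and `A ∩ B` is the first event on the
right-hand side.
-/

open MeasureTheory ProbabilityTheory

section

variable {Ω : Type*} [MeasurableSpace Ω] {μ : Measure Ω}

theorem condP_preimage_congr {α : Type*} {f g : Ω → α} {B : Set Ω} {S : Set α}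
    (h : Set.EqOn f g B) : condP μ (f ⁻¹' S) B = condP μ (g ⁻¹' S) B := by
  have hinter : f ⁻¹' S ∩ B = g ⁻¹' S ∩ B := Set.ext fun _ =>
    and_congr_left fun hB => by rw [Set.mem_preimage, Set.mem_preimage, h hB]
  rw [condP, condP, hinter]

namespace ProbabilityTheory.IndepFun

variable [IsFiniteMeasure μ] {β γ : Type*} [MeasurableSpace β] [MeasurableSingletonClass β]
  [MeasurableSpace γ] {X : Ω → β} {V : Ω → γ} {x : β}

theorem condP_preimage_eq (hindep : IndepFun X V μ) {T : Set γ} (hT : MeasurableSet T)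
    (hx : μ (X ⁻¹' {x}) ≠ 0) :
    condP μ (V ⁻¹' T) (X ⁻¹' {x}) = μ.real (V ⁻¹' T) := by
  rw [condP, Set.inter_comm,
    hindep.measure_inter_preimage_eq_mul _ _ (measurableSet_singleton x) hT, ENNReal.toReal_mul]
  exact mul_div_cancel_left₀ _ ((measureReal_ne_zero_iff).2 hx)

theorem condP_preimage_eq_of_eqOn (hindep : IndepFun X V μ) (hx : μ (X ⁻¹' {x}) ≠ 0)
    {α : Type*} [MeasurableSpace α] {f : Ω → α} {g : γ → α} (hg : Measurable g)
    (h : Set.EqOn f (g ∘ V) (X ⁻¹' {x})) {S : Set α} (hS : MeasurableSet S) :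
    condP μ (f ⁻¹' S) (X ⁻¹' {x}) = μ.real ((g ∘ V) ⁻¹' S) :=
  (condP_preimage_congr h).trans (hindep.condP_preimage_eq (hg hS) hx)

end ProbabilityTheory.IndepFun

theorem measure_ne_zero_of_union_eq_univ [IsProbabilityMeasure μ] {s t : Set Ω}
    (hst : s ∪ t = Set.univ) (ht : μ t < 1) : μ s ≠ 0 := by
  intro hs
  have := measure_union_le (μ := μ) s t
  rw [hst, measure_univ, hs, zero_add] at this
  exact ht.not_ge this

theorem measureReal_add_sub_one_le [IsProbabilityMeasure μ] {A B C : Set Ω}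
    (hB : MeasurableSet B) (hC : MeasurableSet C) (hdisj : Disjoint (A ∪ B) C) :
    μ.real A + μ.real B - 1 ≤ μ.real (A ∩ B) - μ.real C := by
  have hunion := measureReal_union_add_inter (μ := μ) (s := A) hB
  have hle : μ.real (A ∪ B ∪ C) ≤ 1 := measureReal_le_one
  rw [measureReal_union hdisj hC] at hle
  linarith

end

theorem statement15_general
    {Ω : Type*} [MeasurableSpace Ω] (μ : Measure Ω) [IsProbabilityMeasure μ]
    {ny nm : ℕ}
    (Y1 Y0 Y : Ω → (Fin ny → ℝ)) (M1 M0 M : Ω → (Fin nm → ℝ)) (X : Ω → ℕ)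
    (hY1meas : Measurable Y1) (hY0meas : Measurable Y0)
    (hM1meas : Measurable M1) (hM0meas : Measurable M0)
    (hXbin : ∀ ω, X ω ≤ 1)
    (hXpos : 0 < μ {ω | X ω = 1}) (hXlt : μ {ω | X ω = 1} < 1)
    (hindep : IndepFun X (fun ω => (Y1 ω, Y0 ω, M1 ω, M0 ω)) μ)
    (hYcons1 : ∀ ω, X ω = 1 → Y ω = Y1 ω)
    (hYcons0 : ∀ ω, X ω = 0 → Y ω = Y0 ω)
    (hMcons1 : ∀ ω, X ω = 1 → M ω = M1 ω)
    (hMcons0 : ∀ ω, X ω = 0 → M ω = M0 ω)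
    (ya : Set (Fin ny → ℝ)) (ma : Set (Fin nm → ℝ))
    (hya : MeasurableSet ya) (hma : MeasurableSet ma)
    :
    condP μ {ω | Y ω ∈ ya ∧ M ω ∈ ma} {ω | X ω = 1}
      + condP μ {ω | Y ω ∉ ya ∧ M ω ∈ ma} {ω | X ω = 0} - 1
    ≤ (μ {ω | Y1 ω ∈ ya ∧ Y0 ω ∉ ya ∧ M1 ω ∈ ma ∧ M0 ω ∈ ma}).toReal - (μ {ω | Y1 ω ∉ ya ∧ Y0 ω ∈ ya ∧ M1 ω ∈ ma ∧ M0 ω ∈ ma}).toReal := by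
  have hXcover : {ω | X ω = 0} ∪ {ω | X ω = 1} = Set.univ :=
    Set.eq_univ_of_forall fun ω => by
      have := hXbin ω
      simp only [Set.mem_union, Set.mem_ofPred_eq]
      omega
  have hX0 : μ {ω | X ω = 0} ≠ 0 := measure_ne_zero_of_union_eq_univ hXcover hXlt
  have htreated : condP μ {ω | Y ω ∈ ya ∧ M ω ∈ ma} {ω | X ω = 1}
      = μ.real {ω | Y1 ω ∈ ya ∧ M1 ω ∈ ma} :=
    hindep.condP_preimage_eq_of_eqOn hXpos.ne' (f := fun ω => (Y ω, M ω))
      (g := fun p => (p.1, p.2.2.1)) (by fun_prop)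
      (fun ω hω => Prod.ext (hYcons1 ω hω) (hMcons1 ω hω)) (hya.prod hma)
  have hcontrol : condP μ {ω | Y ω ∉ ya ∧ M ω ∈ ma} {ω | X ω = 0}
      = μ.real {ω | Y0 ω ∉ ya ∧ M0 ω ∈ ma} :=
    hindep.condP_preimage_eq_of_eqOn hX0 (f := fun ω => (Y ω, M ω))
      (g := fun p => (p.2.1, p.2.2.2)) (by fun_prop)
      (fun ω hω => Prod.ext (hYcons0 ω hω) (hMcons0 ω hω)) (hya.compl.prod hma)
  have hboth : {ω | Y1 ω ∈ ya ∧ Y0 ω ∉ ya ∧ M1 ω ∈ ma ∧ M0 ω ∈ ma}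
      = {ω | Y1 ω ∈ ya ∧ M1 ω ∈ ma} ∩ {ω | Y0 ω ∉ ya ∧ M0 ω ∈ ma} := by
    ext ω; simp only [Set.mem_inter_iff, Set.mem_ofPred_eq]; tauto
  have hdisj : Disjoint ({ω | Y1 ω ∈ ya ∧ M1 ω ∈ ma} ∪ {ω | Y0 ω ∉ ya ∧ M0 ω ∈ ma})
      {ω | Y1 ω ∉ ya ∧ Y0 ω ∈ ya ∧ M1 ω ∈ ma ∧ M0 ω ∈ ma} := by
    rw [Set.disjoint_left]
    rintro ω (hω | hω) hc
    · exact hc.1 hω.1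
    · exact hω.1 hc.2.1
  rw [htreated, hcontrol, hboth]
  exact measureReal_add_sub_one_le ((hY0meas hya.compl).inter (hM0meas hma))
    ((hY1meas hya.compl).inter ((hY0meas hya).inter ((hM1meas hma).inter (hM0meas hma)))) hdisj

theorem statement15
    {Ω : Type*} [MeasurableSpace Ω] (μ : Measure Ω) [IsProbabilityMeasure μ]
    {ny nm : ℕ} (hny : 0 < ny) (hnm : 0 < nm)
    (Y1 Y0 Y : Ω → (Fin ny → ℝ)) (M1 M0 M : Ω → (Fin nm → ℝ)) (X : Ω → ℕ)
    (hY1meas : Measurable Y1) (hY0meas : Measurable Y0)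
    (hM1meas : Measurable M1) (hM0meas : Measurable M0)
    (hXmeas : Measurable X) (hXbin : ∀ ω, X ω ≤ 1)
    (hXpos : 0 < μ {ω | X ω = 1}) (hXlt : μ {ω | X ω = 1} < 1)
    (hindep : IndepFun X (fun ω => (Y1 ω, Y0 ω, M1 ω, M0 ω)) μ)
    (hYcons1 : ∀ ω, X ω = 1 → Y ω = Y1 ω)
    (hYcons0 : ∀ ω, X ω = 0 → Y ω = Y0 ω)
    (hMcons1 : ∀ ω, X ω = 1 → M ω = M1 ω)
    (hMcons0 : ∀ ω, X ω = 0 → M ω = M0 ω)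
    (ya : Set (Fin ny → ℝ)) (ma : Set (Fin nm → ℝ))
    (hya : MeasurableSet ya) (hma : MeasurableSet ma)
    :
    condP μ {ω | Y ω ∈ ya ∧ M ω ∈ ma} {ω | X ω = 1}
      + condP μ {ω | Y ω ∉ ya ∧ M ω ∈ ma} {ω | X ω = 0} - 1
    ≤ (μ {ω | Y1 ω ∈ ya ∧ Y0 ω ∉ ya ∧ M1 ω ∈ ma ∧ M0 ω ∈ ma}).toReal - (μ {ω | Y1 ω ∉ ya ∧ Y0 ω ∈ ya ∧ M1 ω ∈ ma ∧ M0 ω ∈ ma}).toReal :=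
  statement15_general μ Y1 Y0 Y M1 M0 M X hY1meas hY0meas hM1meas hM0meas hXbin hXpos hXlt hindep
    hYcons1 hYcons0 hMcons1 hMcons0 ya ma hya hma
end

section
/- Assume the set-monotonicity condition μ({ω : M1(ω) ∉ m_a and M0(ω) ∈ m_a}) = 0. Then P(Y ∉ y_a, M ∈ m_a | X=0) − P(Y ∉ y_a, M ∈ m_a | X=1) ≤ μ(Y1 ∈ y_a, Y0 ∉ y_a, M1 ∈ m_a, M0 ∈ m_a) − μ(Y1 ∉ y_a, Y0 ∈ y_a, M1 ∈ m_a, M0 ∈ m_a), where μ(Y1 ∈ A, Y0 ∈ B, M1 ∈ C, M0 ∈ D) abbreviates the measure of the corresponding intersection of preimages. -/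
open MeasureTheory ProbabilityTheory

theorem statement17
    {Ω : Type*} [MeasurableSpace Ω] (μ : Measure Ω) [IsProbabilityMeasure μ]
    {ny nm : ℕ} (hny : 0 < ny) (hnm : 0 < nm)
    (Y1 Y0 Y : Ω → (Fin ny → ℝ)) (M1 M0 M : Ω → (Fin nm → ℝ)) (X : Ω → ℕ)
    (hY1meas : Measurable Y1) (hY0meas : Measurable Y0)
    (hM1meas : Measurable M1) (hM0meas : Measurable M0)
    (hXmeas : Measurable X) (hXbin : ∀ ω, X ω ≤ 1)
    (hXpos : 0 < μ {ω | X ω = 1}) (hXlt : μ {ω | X ω = 1} < 1)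
    (hindep : IndepFun X (fun ω => (Y1 ω, Y0 ω, M1 ω, M0 ω)) μ)
    (hYcons1 : ∀ ω, X ω = 1 → Y ω = Y1 ω)
    (hYcons0 : ∀ ω, X ω = 0 → Y ω = Y0 ω)
    (hMcons1 : ∀ ω, X ω = 1 → M ω = M1 ω)
    (hMcons0 : ∀ ω, X ω = 0 → M ω = M0 ω)
    (ya : Set (Fin ny → ℝ)) (ma : Set (Fin nm → ℝ))
    (hya : MeasurableSet ya) (hma : MeasurableSet ma)
    (hmono : μ {ω | M1 ω ∉ ma ∧ M0 ω ∈ ma} = 0) :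
    condP μ {ω | Y ω ∉ ya ∧ M ω ∈ ma} {ω | X ω = 0}
      - condP μ {ω | Y ω ∉ ya ∧ M ω ∈ ma} {ω | X ω = 1}
    ≤ (μ {ω | Y1 ω ∈ ya ∧ Y0 ω ∉ ya ∧ M1 ω ∈ ma ∧ M0 ω ∈ ma}).toReal - (μ {ω | Y1 ω ∉ ya ∧ Y0 ω ∈ ya ∧ M1 ω ∈ ma ∧ M0 ω ∈ ma}).toReal := by
  classical
  set V : Ω → (Fin ny → ℝ) × (Fin ny → ℝ) × (Fin nm → ℝ) × (Fin nm → ℝ) :=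
    fun ω => (Y1 ω, Y0 ω, M1 ω, M0 ω) with hVdef
  have hVmeas : Measurable V :=
    hY1meas.prodMk (hY0meas.prodMk (hM1meas.prodMk hM0meas))
  -- measurable projections
  have hp1 : Measurable fun p : (Fin ny → ℝ) × (Fin ny → ℝ) × (Fin nm → ℝ) × (Fin nm → ℝ) => p.1 :=
    measurable_fst
  have hp2 : Measurable fun p : (Fin ny → ℝ) × (Fin ny → ℝ) × (Fin nm → ℝ) × (Fin nm → ℝ) => p.2.1 :=
    measurable_fst.comp measurable_snd
  have hp3 : Measurable fun p : (Fin ny → ℝ) × (Fin ny → ℝ) × (Fin nm → ℝ) × (Fin nm → ℝ) => p.2.2.1 :=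
    measurable_fst.comp (measurable_snd.comp measurable_snd)
  have hp4 : Measurable fun p : (Fin ny → ℝ) × (Fin ny → ℝ) × (Fin nm → ℝ) × (Fin nm → ℝ) => p.2.2.2 :=
    measurable_snd.comp (measurable_snd.comp measurable_snd)
  set T0 : Set ((Fin ny → ℝ) × (Fin ny → ℝ) × (Fin nm → ℝ) × (Fin nm → ℝ)) :=
    {p | p.2.1 ∉ ya ∧ p.2.2.2 ∈ ma} with hT0def
  set T1 : Set ((Fin ny → ℝ) × (Fin ny → ℝ) × (Fin nm → ℝ) × (Fin nm → ℝ)) :=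
    {p | p.1 ∉ ya ∧ p.2.2.1 ∈ ma} with hT1def
  have hT0 : MeasurableSet T0 := (hp2 hya.compl).inter (hp4 hma)
  have hT1 : MeasurableSet T1 := (hp1 hya.compl).inter (hp3 hma)
  -- X events
  have hX0set : {ω | X ω = 0} = X ⁻¹' {0} := rfl
  have hX1set : {ω | X ω = 1} = X ⁻¹' {1} := rfl
  have hcompl : {ω | X ω = 0} = {ω | X ω = 1}ᶜ := by
    ext ω
    simp only [Set.mem_setOf_eq, Set.mem_compl_iff]
    constructor
    · intro h h1; omega
    · intro h; have := hXbin ω; omega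
  have hμ1ne : μ {ω | X ω = 1} ≠ 0 := hXpos.ne'
  have hμ1top : μ {ω | X ω = 1} ≠ ⊤ := (measure_lt_top μ _).ne
  have hμ0 : μ {ω | X ω = 0} = 1 - μ {ω | X ω = 1} := by
    rw [hcompl, measure_compl (show MeasurableSet {ω | X ω = 1} from
      hXmeas (measurableSet_singleton 1)) hμ1top, measure_univ]
  have hμ0ne : μ {ω | X ω = 0} ≠ 0 := by
    rw [hμ0]
    intro h
    have := tsub_eq_zero_iff_le.mp h
    exact absurd this (not_le.mpr hXlt)
  -- rewrite events via consistency
  have hE0 : {ω | Y ω ∉ ya ∧ M ω ∈ ma} ∩ {ω | X ω = 0} = V ⁻¹' T0 ∩ X ⁻¹' {0} := by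
    ext ω
    simp only [Set.mem_inter_iff, Set.mem_setOf_eq, Set.mem_preimage, Set.mem_singleton_iff,
      hT0def, hVdef]
    constructor
    · rintro ⟨⟨hy, hm⟩, hx⟩
      rw [hYcons0 ω hx, hMcons0 ω hx] at *
      exact ⟨⟨hy, hm⟩, hx⟩
    · rintro ⟨⟨hy, hm⟩, hx⟩
      rw [← hYcons0 ω hx, ← hMcons0 ω hx] at *
      exact ⟨⟨hy, hm⟩, hx⟩
  have hE1 : {ω | Y ω ∉ ya ∧ M ω ∈ ma} ∩ {ω | X ω = 1} = V ⁻¹' T1 ∩ X ⁻¹' {1} := by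
    ext ω
    simp only [Set.mem_inter_iff, Set.mem_setOf_eq, Set.mem_preimage, Set.mem_singleton_iff,
      hT1def, hVdef]
    constructor
    · rintro ⟨⟨hy, hm⟩, hx⟩
      rw [hYcons1 ω hx, hMcons1 ω hx] at *
      exact ⟨⟨hy, hm⟩, hx⟩
    · rintro ⟨⟨hy, hm⟩, hx⟩
      rw [← hYcons1 ω hx, ← hMcons1 ω hx] at *
      exact ⟨⟨hy, hm⟩, hx⟩
  -- independence
  have hind0 : μ (V ⁻¹' T0 ∩ X ⁻¹' {0}) = μ (V ⁻¹' T0) * μ (X ⁻¹' {0}) := by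
    rw [Set.inter_comm, hindep.measure_inter_preimage_eq_mul {0} T0
      (measurableSet_singleton 0) hT0, mul_comm]
  have hind1 : μ (V ⁻¹' T1 ∩ X ⁻¹' {1}) = μ (V ⁻¹' T1) * μ (X ⁻¹' {1}) := by
    rw [Set.inter_comm, hindep.measure_inter_preimage_eq_mul {1} T1
      (measurableSet_singleton 1) hT1, mul_comm]
  -- condP values
  have htopV0 : μ (V ⁻¹' T0) ≠ ⊤ := (measure_lt_top μ _).ne
  have htopV1 : μ (V ⁻¹' T1) ≠ ⊤ := (measure_lt_top μ _).ne
  have hc0 : condP μ {ω | Y ω ∉ ya ∧ M ω ∈ ma} {ω | X ω = 0} = (μ (V ⁻¹' T0)).toReal := by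
    unfold condP
    rw [hE0, hind0, ENNReal.toReal_mul, ← hX0set]
    rw [mul_div_assoc, div_self, mul_one]
    simp [ENNReal.toReal_ne_zero, hμ0ne, (measure_lt_top μ _).ne]
  have hc1 : condP μ {ω | Y ω ∉ ya ∧ M ω ∈ ma} {ω | X ω = 1} = (μ (V ⁻¹' T1)).toReal := by
    unfold condP
    rw [hE1, hind1, ENNReal.toReal_mul, ← hX1set]
    rw [mul_div_assoc, div_self, mul_one]
    simp [ENNReal.toReal_ne_zero, hμ1ne, hμ1top]
  rw [hc0, hc1]
  -- the measure-theoretic inequality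
  set A := {ω | Y1 ω ∈ ya ∧ Y0 ω ∉ ya ∧ M1 ω ∈ ma ∧ M0 ω ∈ ma} with hAdef
  set B := {ω | Y1 ω ∉ ya ∧ Y0 ω ∈ ya ∧ M1 ω ∈ ma ∧ M0 ω ∈ ma} with hBdef
  set C := {ω | Y1 ω ∉ ya ∧ Y0 ω ∉ ya ∧ M1 ω ∈ ma ∧ M0 ω ∈ ma} with hCdef
  have hBm : MeasurableSet B :=
    (hY1meas hya.compl).inter ((hY0meas hya).inter ((hM1meas hma).inter (hM0meas hma)))
  have hCm : MeasurableSet C :=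
    (hY1meas hya.compl).inter ((hY0meas hya.compl).inter ((hM1meas hma).inter (hM0meas hma)))
  -- claim 1 : μ (V ⁻¹' T0) ≤ μ A + μ C
  have hsub0 : V ⁻¹' T0 ⊆ A ∪ C ∪ {ω | M1 ω ∉ ma ∧ M0 ω ∈ ma} := by
    intro ω hω
    simp only [Set.mem_preimage, hT0def, Set.mem_setOf_eq, hVdef] at hω
    by_cases hM1 : M1 ω ∈ ma
    · by_cases hY1mem : Y1 ω ∈ ya
      · exact Or.inl (Or.inl ⟨hY1mem, hω.1, hM1, hω.2⟩)
      · exact Or.inl (Or.inr ⟨hY1mem, hω.1, hM1, hω.2⟩)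
    · exact Or.inr ⟨hM1, hω.2⟩
  have hclaim1 : μ (V ⁻¹' T0) ≤ μ A + μ C := by
    calc μ (V ⁻¹' T0) ≤ μ (A ∪ C ∪ {ω | M1 ω ∉ ma ∧ M0 ω ∈ ma}) := measure_mono hsub0
    _ ≤ μ (A ∪ C) + μ {ω | M1 ω ∉ ma ∧ M0 ω ∈ ma} := measure_union_le _ _
    _ = μ (A ∪ C) := by rw [hmono, add_zero]
    _ ≤ μ A + μ C := measure_union_le _ _
  -- claim 2 : μ B + μ C ≤ μ (V ⁻¹' T1)
  have hdisj : Disjoint B C := by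
    rw [Set.disjoint_left]
    rintro ω ⟨_, h1, _, _⟩ ⟨_, h2, _, _⟩
    exact h2 h1
  have hsub1 : B ∪ C ⊆ V ⁻¹' T1 := by
    rintro ω (⟨h1, _, h3, _⟩ | ⟨h1, _, h3, _⟩) <;>
      exact ⟨h1, h3⟩
  have hclaim2 : μ B + μ C ≤ μ (V ⁻¹' T1) := by
    rw [← measure_union hdisj hCm]
    exact measure_mono hsub1
  -- finish with toReal arithmetic
  have hAt : μ A ≠ ⊤ := (measure_lt_top μ _).ne
  have hBt : μ B ≠ ⊤ := (measure_lt_top μ _).ne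
  have hCt : μ C ≠ ⊤ := (measure_lt_top μ _).ne
  have h1 : (μ (V ⁻¹' T0)).toReal ≤ (μ A).toReal + (μ C).toReal := by
    rw [← ENNReal.toReal_add hAt hCt]
    exact ENNReal.toReal_mono (ENNReal.add_ne_top.mpr ⟨hAt, hCt⟩) hclaim1
  have h2 : (μ B).toReal + (μ C).toReal ≤ (μ (V ⁻¹' T1)).toReal := by
    rw [← ENNReal.toReal_add hBt hCt]
    exact ENNReal.toReal_mono htopV1 hclaim2
  linarith
end
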